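/- arXiv:2501.03037 — 3 statements merged into one kernel-verified Lean document; each statement's English description precedes it below -/
import Mathlib

section
/- Let (H_3, S) be the Coxeter system of type H_3 with S = {s_1, s_2, s_3}, m(s_1,s_2) = 3, m(s_2,s_3) = 5, m(s_1,s_3) = 2. Define X := {e, s_3, s_3s_2, s_3s_2s_3, s_3s_2s_3s_2, s_3s_2s_3s_2s_1, s_3s_2s_3s_2s_1s_2, s_3s_2s_3s_2s_1s_2s_3, s_3s_2s_3s_2s_1s_2s_3s_2, s_3s_2s_3s_2s_1s_2s_3s_2s_3}, Y := {e, s_2, s_2s_1, s_3s_2s_1, s_2s_3s_2s_1, s_1s_2s_3s_2s_1} and Z := {s_1, s_1s_2, s_1s_2s_1, s_1s_3s_2s_1, s_2s_1s_3s_2s_1, s_1s_2s_1s_3s_2s_1}. Then Y and Z are disjoint, every w ∈ H_3 factorizes uniquely as w = u x with u ∈ Y ∪ Z and x ∈ X, ℓ(ux) = ℓ(u) + ℓ(x) for all such u, x, and the map L_{H_3} : H_3 → {0,1} × {0,…,5} × {0,…,9} defined by L_{H_3}(ux) = (0, ℓ(u), ℓ(x)) if u ∈ Y and L_{H_3}(ux)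 = (1, ℓ(u)−1, ℓ(x)) if u ∈ Z is a Lehmer code for (H_3, S). -/
set_option maxRecDepth 10000

namespace S13

abbrev Wd := List (Fin 3)

def mval : Fin 3 → Fin 3 → ℕ
  | 0, 0 => 1 | 0, 1 => 3 | 0, 2 => 2
  | 1, 0 => 3 | 1, 1 => 1 | 1, 2 => 5
  | 2, 0 => 2 | 2, 1 => 5 | 2, 2 => 1

def applyMove (mv : ℕ × Fin 3 × Fin 3) (w : Wd) : Option Wd :=
  let mm := if mv.2.1 = mv.2.2 then 2 else mval mv.2.1 mv.2.2
  let pat : Wd := if mv.2.1 = mv.2.2 then [mv.2.1, mv.2.1]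
    else CoxeterSystem.alternatingWord mv.2.1 mv.2.2 mm
  let rep : Wd := if mv.2.1 = mv.2.2 then []
    else CoxeterSystem.alternatingWord mv.2.2 mv.2.1 mm
  if (w.drop mv.1).take mm = pat then
    some (w.take mv.1 ++ rep ++ (w.drop mv.1).drop mm) else none

def applyMoves : List (ℕ × Fin 3 × Fin 3) → Wd → Option Wd
  | [], w => some w
  | mv :: ms, w =>
    match applyMove mv w with
    | none => none
    | some w' => applyMoves ms w'

def gp : Fin 3 → Equiv.Perm (Fin 7)
  | 0 => Equiv.swap 1 2 * Equiv.swap 3 4 * Equiv.swap 5 6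
  | 1 => Equiv.swap 0 1 * Equiv.swap 3 4 * Equiv.swap 5 6
  | 2 => Equiv.swap 1 3 * Equiv.swap 2 4 * Equiv.swap 5 6

def pg (w : Wd) : Equiv.Perm (Fin 7) := (w.map gp).prod

def encP (p : Equiv.Perm (Fin 7)) : ℕ :=
  (List.ofFn fun i => (p i : ℕ)).foldr (fun d acc => d + 7 * acc) 0

def W120T : List Wd := [[],
 [0],
 [1],
 [2],
 [0,1],
 [0,2],
 [1,0],
 [1,2],
 [2,1],
 [0,1,0],
 [0,1,2],
 [0,2,1],
 [1,0,2],
 [1,2,1],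
 [2,1,0],
 [2,1,2],
 [0,1,0,2],
 [0,1,2,1],
 [0,2,1,0],
 [0,2,1,2],
 [1,0,2,1],
 [1,2,1,0],
 [1,2,1,2],
 [2,1,0,2],
 [2,1,2,1],
 [0,1,0,2,1],
 [0,1,2,1,0],
 [0,1,2,1,2],
 [0,2,1,0,2],
 [0,2,1,2,1],
 [1,0,2,1,0],
 [1,0,2,1,2],
 [1,2,1,0,2],
 [1,2,1,2,1],
 [2,1,0,2,1],
 [2,1,2,1,0],
 [0,1,0,2,1,0],
 [0,1,0,2,1,2],
 [0,1,2,1,0,2],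
 [0,1,2,1,2,1],
 [0,2,1,0,2,1],
 [0,2,1,2,1,0],
 [1,0,2,1,0,2],
 [1,0,2,1,2,1],
 [1,2,1,0,2,1],
 [1,2,1,2,1,0],
 [2,1,0,2,1,0],
 [2,1,0,2,1,2],
 [0,1,0,2,1,0,2],
 [0,1,0,2,1,2,1],
 [0,1,2,1,0,2,1],
 [0,1,2,1,2,1,0],
 [0,2,1,0,2,1,0],
 [0,2,1,0,2,1,2],
 [1,0,2,1,0,2,1],
 [1,0,2,1,2,1,0],
 [1,2,1,0,2,1,0],
 [1,2,1,0,2,1,2],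
 [2,1,0,2,1,0,2],
 [2,1,0,2,1,2,1],
 [0,1,0,2,1,0,2,1],
 [0,1,0,2,1,2,1,0],
 [0,1,2,1,0,2,1,0],
 [0,1,2,1,0,2,1,2],
 [0,2,1,0,2,1,0,2],
 [0,2,1,0,2,1,2,1],
 [1,0,2,1,0,2,1,0],
 [1,0,2,1,0,2,1,2],
 [1,2,1,0,2,1,0,2],
 [1,2,1,0,2,1,2,1],
 [2,1,0,2,1,0,2,1],
 [2,1,0,2,1,2,1,0],
 [0,1,0,2,1,0,2,1,0],
 [0,1,0,2,1,0,2,1,2],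
 [0,1,2,1,0,2,1,0,2],
 [0,1,2,1,0,2,1,2,1],
 [0,2,1,0,2,1,0,2,1],
 [0,2,1,0,2,1,2,1,0],
 [1,0,2,1,0,2,1,0,2],
 [1,0,2,1,0,2,1,2,1],
 [1,2,1,0,2,1,0,2,1],
 [1,2,1,0,2,1,2,1,0],
 [2,1,0,2,1,0,2,1,0],
 [2,1,0,2,1,0,2,1,2],
 [0,1,0,2,1,0,2,1,0,2],
 [0,1,0,2,1,0,2,1,2,1],
 [0,1,2,1,0,2,1,0,2,1],
 [0,1,2,1,0,2,1,2,1,0],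
 [0,2,1,0,2,1,0,2,1,0],
 [0,2,1,0,2,1,0,2,1,2],
 [1,0,2,1,0,2,1,0,2,1],
 [1,0,2,1,0,2,1,2,1,0],
 [1,2,1,0,2,1,0,2,1,0],
 [1,2,1,0,2,1,0,2,1,2],
 [2,1,0,2,1,0,2,1,0,2],
 [0,1,0,2,1,0,2,1,0,2,1],
 [0,1,0,2,1,0,2,1,2,1,0],
 [0,1,2,1,0,2,1,0,2,1,0],
 [0,1,2,1,0,2,1,0,2,1,2],
 [0,2,1,0,2,1,0,2,1,0,2],
 [1,0,2,1,0,2,1,0,2,1,0],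
 [1,0,2,1,0,2,1,0,2,1,2],
 [1,2,1,0,2,1,0,2,1,0,2],
 [2,1,0,2,1,0,2,1,0,2,1],
 [0,1,0,2,1,0,2,1,0,2,1,0],
 [0,1,0,2,1,0,2,1,0,2,1,2],
 [0,1,2,1,0,2,1,0,2,1,0,2],
 [0,2,1,0,2,1,0,2,1,0,2,1],
 [1,0,2,1,0,2,1,0,2,1,0,2],
 [1,2,1,0,2,1,0,2,1,0,2,1],
 [2,1,0,2,1,0,2,1,0,2,1,2],
 [0,1,0,2,1,0,2,1,0,2,1,0,2],
 [0,1,2,1,0,2,1,0,2,1,0,2,1],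
 [0,2,1,0,2,1,0,2,1,0,2,1,2],
 [1,0,2,1,0,2,1,0,2,1,0,2,1],
 [1,2,1,0,2,1,0,2,1,0,2,1,2],
 [0,1,0,2,1,0,2,1,0,2,1,0,2,1],
 [0,1,2,1,0,2,1,0,2,1,0,2,1,2],
 [1,0,2,1,0,2,1,0,2,1,0,2,1,2],
 [0,1,0,2,1,0,2,1,0,2,1,0,2,1,2]]

def NXTT : List (List Nat) := [[1,0,4,5,2,3,9,10,11,6,7,8,16,17,18,19,12,13,14,15,25,26,27,28,29,20,21,22,23,24,36,37,38,39,40,41,30,31,32,33,34,35,48,49,50,51,52,53,42,43,44,45,46,47,60,61,62,63,64,65,54,55,56,57,58,59,72,73,74,75,76,77,66,67,68,69,70,71,84,85,86,87,88,89,78,79,80,81,82,83,95,96,97,98,99,90,91,92,93,94,104,105,106,107,100,101,102,103,111,112,113,108,109,110,116,117,114,115,119,118],[2,6,0,7,9,12,1,3,13,4,16,20,5,8,21,22,10,25,30,31,11,14,15,32,33,17,36,37,42,43,18,19,23,24,44,45,26,27,48,49,54,55,28,29,34,35,56,57,38,39,60,61,66,67,40,41,46,47,68,69,50,51,72,73,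78,79,52,53,58,59,80,81,62,63,84,85,90,91,64,65,70,71,92,93,74,75,95,96,100,101,76,77,82,83,102,86,87,104,105,108,88,89,94,109,97,98,111,114,99,103,115,106,116,118,107,110,112,119,113,117],[3,5,8,0,11,1,14,15,2,18,19,4,23,24,6,7,28,29,9,10,34,35,33,12,13,40,41,39,16,17,46,47,45,22,20,21,52,53,51,27,25,26,58,59,56,32,30,31,64,65,62,38,36,37,70,71,44,68,42,43,76,77,50,74,48,49,82,83,57,80,54,55,88,89,63,86,60,61,94,93,69,92,66,67,99,98,75,97,72,73,103,102,81,79,78,107,106,87,85,84,109,110,91,90,112,113,96,95,115,100,101,117,104,105,118,108,119,111,114,116]]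

def CERTT : List (List (List (Nat × Fin 3 × Fin 3))) := [[[],
 [(0,0,0)],
 [],
 [],
 [(0,0,0)],
 [(0,0,0)],
 [],
 [],
 [],
 [(0,0,0)],
 [(0,0,0)],
 [(0,0,0)],
 [],
 [],
 [],
 [],
 [(0,0,0)],
 [(0,0,0)],
 [(0,0,0)],
 [(0,0,0)],
 [],
 [],
 [],
 [],
 [],
 [(0,0,0)],
 [(0,0,0)],
 [(0,0,0)],
 [(0,0,0)],
 [(0,0,0)],
 [],
 [],
 [],
 [],
 [],
 [],
 [(0,0,0)],
 [(0,0,0)],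
 [(0,0,0)],
 [(0,0,0)],
 [(0,0,0)],
 [(0,0,0)],
 [],
 [],
 [],
 [],
 [],
 [],
 [(0,0,0)],
 [(0,0,0)],
 [(0,0,0)],
 [(0,0,0)],
 [(0,0,0)],
 [(0,0,0)],
 [],
 [],
 [],
 [],
 [],
 [],
 [(0,0,0)],
 [(0,0,0)],
 [(0,0,0)],
 [(0,0,0)],
 [(0,0,0)],
 [(0,0,0)],
 [],
 [],
 [],
 [],
 [],
 [],
 [(0,0,0)],
 [(0,0,0)],
 [(0,0,0)],
 [(0,0,0)],
 [(0,0,0)],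
 [(0,0,0)],
 [],
 [],
 [],
 [],
 [],
 [],
 [(0,0,0)],
 [(0,0,0)],
 [(0,0,0)],
 [(0,0,0)],
 [(0,0,0)],
 [(0,0,0)],
 [],
 [],
 [],
 [],
 [],
 [(0,0,0)],
 [(0,0,0)],
 [(0,0,0)],
 [(0,0,0)],
 [(0,0,0)],
 [],
 [],
 [],
 [],
 [(0,0,0)],
 [(0,0,0)],
 [(0,0,0)],
 [(0,0,0)],
 [],
 [],
 [],
 [(0,0,0)],
 [(0,0,0)],
 [(0,0,0)],
 [],
 [],
 [(0,0,0)],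
 [(0,0,0)],
 [],
 [(0,0,0)]],
[[],
 [],
 [(0,1,1)],
 [],
 [(0,0,1)],
 [],
 [(0,1,1)],
 [(0,1,1)],
 [],
 [(0,0,1),(2,0,0)],
 [(0,0,1)],
 [],
 [(0,1,1)],
 [(0,1,1)],
 [],
 [],
 [(0,0,1),(2,0,0)],
 [(0,0,1)],
 [],
 [],
 [(0,1,1)],
 [(0,1,1)],
 [(0,1,1)],
 [],
 [],
 [(0,0,1),(2,0,0)],
 [(0,0,1)],
 [(0,0,1)],
 [],
 [],
 [(0,1,1)],
 [(0,1,1)],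
 [(0,1,1)],
 [(0,1,1)],
 [],
 [],
 [(0,0,1),(2,0,0)],
 [(0,0,1),(2,0,0)],
 [(0,0,1)],
 [(0,0,1)],
 [],
 [],
 [(0,1,1)],
 [(0,1,1)],
 [(0,1,1)],
 [(0,1,1)],
 [],
 [],
 [(0,0,1),(2,0,0)],
 [(0,0,1),(2,0,0)],
 [(0,0,1)],
 [(0,0,1)],
 [],
 [],
 [(0,1,1)],
 [(0,1,1)],
 [(0,1,1)],
 [(0,1,1)],
 [],
 [],
 [(0,0,1),(2,0,0)],
 [(0,0,1),(2,0,0)],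
 [(0,0,1)],
 [(0,0,1)],
 [],
 [],
 [(0,1,1)],
 [(0,1,1)],
 [(0,1,1)],
 [(0,1,1)],
 [],
 [],
 [(0,0,1),(2,0,0)],
 [(0,0,1),(2,0,0)],
 [(0,0,1)],
 [(0,0,1)],
 [],
 [],
 [(0,1,1)],
 [(0,1,1)],
 [(0,1,1)],
 [(0,1,1)],
 [],
 [],
 [(0,0,1),(2,0,0)],
 [(0,0,1),(2,0,0)],
 [(0,0,1)],
 [(0,0,1)],
 [],
 [],
 [(0,1,1)],
 [(0,1,1)],
 [(0,1,1)],
 [(0,1,1)],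
 [],
 [(0,0,1),(2,0,0)],
 [(0,0,1),(2,0,0)],
 [(0,0,1)],
 [(0,0,1)],
 [],
 [(0,1,1)],
 [(0,1,1)],
 [(0,1,1)],
 [],
 [(0,0,1),(2,0,0)],
 [(0,0,1),(2,0,0)],
 [(0,0,1)],
 [],
 [(0,1,1)],
 [(0,1,1)],
 [],
 [(0,0,1),(2,0,0)],
 [(0,0,1)],
 [],
 [(0,1,1)],
 [(0,1,1)],
 [(0,0,1),(2,0,0)],
 [(0,0,1)],
 [(0,1,1)],
 [(0,0,1),(2,0,0)]],
[[],
 [(0,2,0)],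
 [],
 [(0,2,2)],
 [(0,2,0)],
 [(1,0,2),(0,2,2)],
 [],
 [],
 [(0,2,2)],
 [(0,2,0)],
 [(0,2,0)],
 [(1,0,2),(0,2,2)],
 [],
 [],
 [(0,2,2)],
 [(0,2,2)],
 [(0,2,0)],
 [(0,2,0)],
 [(1,0,2),(0,2,2)],
 [(1,0,2),(0,2,2)],
 [],
 [],
 [(0,1,2)],
 [(0,2,2)],
 [(0,2,2)],
 [(0,2,0)],
 [(0,2,0)],
 [(0,2,0),(1,1,2)],
 [(1,0,2),(0,2,2)],
 [(1,0,2),(0,2,2)],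
 [],
 [],
 [(4,0,2),(0,1,2)],
 [(0,1,2),(4,1,1)],
 [(0,2,2)],
 [(0,2,2)],
 [(0,2,0)],
 [(0,2,0)],
 [(5,0,2),(0,2,0),(1,1,2)],
 [(0,2,0),(1,1,2),(5,1,1)],
 [(1,0,2),(0,2,2)],
 [(1,0,2),(0,2,2)],
 [],
 [],
 [(4,0,2),(0,1,2),(4,0,1),(3,2,0)],
 [(0,1,2),(4,1,1),(3,2,0)],
 [(0,2,2)],
 [(0,2,2)],
 [(0,2,0)],
 [(0,2,0)],
 [(5,0,2),(0,2,0),(1,1,2),(5,0,1),(4,2,0)],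
 [(0,2,0),(1,1,2),(5,1,1),(4,2,0)],
 [(1,0,2),(0,2,2)],
 [(1,0,2),(0,2,2)],
 [],
 [],
 [(4,0,2),(5,1,0),(0,1,2),(4,1,1),(3,2,0)],
 [(4,0,2),(0,1,2),(4,0,1),(3,2,0)],
 [(0,2,2)],
 [(0,2,2)],
 [(0,2,0)],
 [(0,2,0)],
 [(5,0,2),(6,1,0),(0,2,0),(1,1,2),(5,1,1),(4,2,0)],
 [(5,0,2),(0,2,0),(1,1,2),(5,0,1),(4,2,0)],
 [(1,0,2),(0,2,2)],
 [(1,0,2),(0,2,2)],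
 [],
 [],
 [(4,0,2),(5,1,0),(0,1,2),(4,1,1),(3,2,0)],
 [(4,0,2),(0,1,2),(4,0,1),(3,2,0)],
 [(0,2,2)],
 [(0,2,2)],
 [(0,2,0)],
 [(0,2,0)],
 [(5,0,2),(6,1,0),(0,2,0),(1,1,2),(5,1,1),(4,2,0)],
 [(5,0,2),(0,2,0),(1,1,2),(5,0,1),(4,2,0)],
 [(1,0,2),(0,2,2)],
 [(1,0,2),(0,2,2)],
 [],
 [(2,0,2),(3,1,0),(5,2,1),(4,0,2),(0,1,2),(4,0,1),(3,2,0)],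
 [(4,0,2),(5,1,0),(0,1,2),(4,1,1),(3,2,0)],
 [(4,0,2),(0,1,2),(4,0,1),(3,2,0)],
 [(0,2,2)],
 [(0,2,2)],
 [(0,2,0)],
 [(3,0,2),(4,1,0),(0,2,0),(6,2,1),(5,0,2),(1,1,2),(5,0,1),(4,2,0)],
 [(5,0,2),(6,1,0),(0,2,0),(1,1,2),(5,1,1),(4,2,0)],
 [(5,0,2),(0,2,0),(1,1,2),(5,0,1),(4,2,0)],
 [(1,0,2),(0,2,2)],
 [(1,0,2),(0,2,2)],
 [],
 [(2,0,2),(3,1,0),(5,2,1),(4,0,2),(0,1,2),(4,0,1),(3,2,0),(9,2,0)],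
 [(4,0,2),(5,1,0),(0,1,2),(4,1,1),(3,2,0)],
 [(4,0,2),(5,1,0),(0,1,2),(4,1,1),(3,2,0),(4,1,2),(2,0,1),(1,2,0)],
 [(0,2,2)],
 [(0,2,0)],
 [(3,0,2),(4,1,0),(0,2,0),(6,2,1),(5,0,2),(1,1,2),(5,0,1),(4,2,0),(10,2,0)],
 [(5,0,2),(6,1,0),(0,2,0),(1,1,2),(5,1,1),(4,2,0)],
 [(5,0,2),(6,1,0),(0,2,0),(1,1,2),(5,1,1),(4,2,0),(5,1,2),(3,0,1),(2,2,0)],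
 [(1,0,2),(0,2,2)],
 [(2,0,2),(8,0,2),(3,1,0),(9,1,0),(5,2,1),(4,0,2),(0,1,2),(4,0,1),(3,2,0),(9,2,0)],
 [],
 [(4,0,2),(10,0,2),(5,1,0),(0,1,2),(4,1,1),(3,2,0),(4,1,2),(2,0,1),(1,2,0)],
 [(0,2,2)],
 [(3,0,2),(9,0,2),(4,1,0),(10,1,0),(0,2,0),(6,2,1),(5,0,2),(1,1,2),(5,0,1),(4,2,0),(10,2,0)],
 [(0,2,0)],
 [(5,0,2),(11,0,2),(6,1,0),(0,2,0),(1,1,2),(5,1,1),(4,2,0),(5,1,2),(3,0,1),(2,2,0)],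
 [(1,0,2),(0,2,2)],
 [(2,0,2),(8,0,2),(3,1,0),(9,1,0),(5,2,1),(4,0,2),(0,1,2),(4,0,1),(3,2,0),(9,2,0)],
 [(4,0,2),(10,0,2),(5,1,0),(0,1,2),(4,1,1),(3,2,0),(4,1,2),(2,0,1),(8,0,1),(1,2,0),(7,2,0)],
 [(0,2,2)],
 [(3,0,2),(9,0,2),(4,1,0),(10,1,0),(0,2,0),(6,2,1),(5,0,2),(1,1,2),(5,0,1),(4,2,0),(10,2,0)],
 [(5,0,2),(11,0,2),(6,1,0),(0,2,0),(1,1,2),(5,1,1),(4,2,0),(5,1,2),(3,0,1),(9,0,1),(2,2,0),(8,2,0)],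
 [(1,0,2),(0,2,2)],
 [(2,0,2),(8,0,2),(3,1,0),(9,1,0),(5,2,1),(4,0,2),(0,1,2),(4,0,1),(6,0,2),(3,2,0),(9,2,0),(7,1,0),(9,2,1),(8,0,2),(4,1,2),(2,0,1),(8,0,1),(1,2,0),(7,2,0)],
 [(4,0,2),(10,0,2),(5,1,0),(0,1,2),(4,1,1),(3,2,0),(4,1,2),(2,0,1),(8,0,1),(1,2,0),(7,2,0)],
 [(3,0,2),(9,0,2),(4,1,0),(10,1,0),(0,2,0),(6,2,1),(5,0,2),(1,1,2),(5,0,1),(7,0,2),(4,2,0),(10,2,0),(8,1,0),(10,2,1),(9,0,2),(5,1,2),(3,0,1),(9,0,1),(2,2,0),(8,2,0)],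
 [(5,0,2),(11,0,2),(6,1,0),(0,2,0),(1,1,2),(5,1,1),(4,2,0),(5,1,2),(3,0,1),(9,0,1),(2,2,0),(8,2,0)],
 [(2,0,2),(8,0,2),(3,1,0),(9,1,0),(5,2,1),(4,0,2),(0,1,2),(4,0,1),(6,0,2),(3,2,0),(9,2,0),(7,1,0),(10,1,2),(9,1,1),(8,0,2),(4,1,2),(2,0,1),(8,0,1),(1,2,0),(7,2,0)],
 [(3,0,2),(9,0,2),(4,1,0),(10,1,0),(0,2,0),(6,2,1),(5,0,2),(1,1,2),(5,0,1),(7,0,2),(4,2,0),(10,2,0),(8,1,0),(11,1,2),(10,1,1),(9,0,2),(5,1,2),(3,0,1),(9,0,1),(2,2,0),(8,2,0)]]]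

def UWT : List Wd := [[],[1],[1,0],[2,1,0],[1,2,1,0],[0,1,2,1,0],[0],[0,1],[0,1,0],[0,2,1,0],[1,0,2,1,0],[0,1,0,2,1,0]]

def XWT : List Wd := [[],[2],[2,1],[2,1,2],[2,1,2,1],[2,1,2,1,0],[2,1,2,1,0,1],[2,1,2,1,0,1,2],[2,1,2,1,0,1,2,1],[2,1,2,1,0,1,2,1,2]]

def UIXT : List Nat := [0,2,6,14,21,26,1,4,9,18,30,36]

def XIXT : List Nat := [0,3,8,15,24,35,46,58,70,83]

def PAIRT : List (List Nat) := [[0,3,8,15,24,35,46,58,70,83],[2,7,13,22,33,45,56,68,80,93],[6,12,20,31,43,55,66,78,90,101],[14,23,34,47,59,71,82,94,103,110],[21,32,44,57,69,81,92,102,109,115],[26,38,50,63,75,87,97,106,112,117],[1,5,11,19,29,41,52,64,76,89],[4,10,17,27,39,51,62,74,86,98],[9,16,25,37,49,61,72,84,95,105],[18,28,40,53,65,77,88,99,107,113],[30,42,54,67,79,91,100,108,114,118],[36,48,60,73,85,96,104,111,116,119]]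

def INVAT : List Nat := [0,6,1,0,7,6,2,1,0,8,7,6,2,1,3,0,8,7,9,6,2,4,1,3,0,8,5,7,9,6,10,2,4,1,3,0,11,8,5,7,9,6,10,2,4,1,0,3,11,8,5,7,6,9,10,2,1,4,0,3,11,8,7,5,6,9,2,10,1,4,0,3,8,11,7,5,6,9,2,10,1,4,3,0,8,11,7,5,9,6,2,10,4,1,3,8,11,5,7,9,10,2,4,3,11,8,5,9,10,4,3,11,5,9,10,4,11,5,10,11]

def INVBT : List Nat := [0,0,0,1,0,1,0,1,2,0,1,2,1,2,0,3,1,2,0,3,2,0,3,1,4,2,0,3,1,4,0,3,1,4,2,5,0,3,1,4,2,5,1,4,2,5,6,3,1,4,2,5,6,3,2,5,6,3,7,4,2,5,6,3,7,4,6,3,7,4,8,5,6,3,7,4,8,5,7,4,8,5,6,9,7,4,8,5,6,9,8,5,6,9,7,8,5,6,9,7,6,9,7,8,6,9,7,8,7,8,9,7,8,9,8,9,8,9,9,9]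

def CODET : List (List Nat) := [[0,0,0],[1,0,0],[0,1,0],[0,0,1],[1,1,0],[1,0,1],[0,2,0],[0,1,1],[0,0,2],[1,2,0],[1,1,1],[1,0,2],[0,2,1],[0,1,2],[0,3,0],[0,0,3],[1,2,1],[1,1,2],[1,3,0],[1,0,3],[0,2,2],[0,4,0],[0,1,3],[0,3,1],[0,0,4],[1,2,2],[0,5,0],[1,1,3],[1,3,1],[1,0,4],[1,4,0],[0,2,3],[0,4,1],[0,1,4],[0,3,2],[0,0,5],[1,5,0],[1,2,3],[0,5,1],[1,1,4],[1,3,2],[1,0,5],[1,4,1],[0,2,4],[0,4,2],[0,1,5],[0,0,6],[0,3,3],[1,5,1],[1,2,4],[0,5,2],[1,1,5],[1,0,6],[1,3,3],[1,4,2],[0,2,5],[0,1,6],[0,4,3],[0,0,7],[0,3,4],[1,5,2],[1,2,5],[1,1,6],[0,5,3],[1,0,7],[1,3,4],[0,2,6],[1,4,3],[0,1,7],[0,4,4],[0,0,8],[0,3,5],[1,2,6],[1,5,3],[1,1,7],[0,5,4],[1,0,8],[1,3,5],[0,2,7],[1,4,4],[0,1,8],[0,4,5],[0,3,6],[0,0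,9],[1,2,7],[1,5,4],[1,1,8],[0,5,5],[1,3,6],[1,0,9],[0,2,8],[1,4,5],[0,4,6],[0,1,9],[0,3,7],[1,2,8],[1,5,5],[0,5,6],[1,1,9],[1,3,7],[1,4,6],[0,2,9],[0,4,7],[0,3,8],[1,5,6],[1,2,9],[0,5,7],[1,3,8],[1,4,7],[0,4,8],[0,3,9],[1,5,7],[0,5,8],[1,3,9],[1,4,8],[0,4,9],[1,5,8],[0,5,9],[1,4,9],[1,5,9]]

def BOXT : List Nat := [0,3,8,15,24,35,46,58,70,83,2,7,13,22,33,45,56,68,80,93,6,12,20,31,43,55,66,78,90,101,14,23,34,47,59,71,82,94,103,110,21,32,44,57,69,81,92,102,109,115,26,38,50,63,75,87,97,106,112,117,1,5,11,19,29,41,52,64,76,89,4,10,17,27,39,51,62,74,86,98,9,16,25,37,49,61,72,84,95,105,18,28,40,53,65,77,88,99,107,113,30,42,54,67,79,91,100,108,114,118,36,48,60,73,85,96,104,111,116,119]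

def SUCT : List (List Nat) := [[1,120,4,5,120,120,9,10,11,120,120,120,16,17,18,19,120,120,120,120,25,30,27,28,29,120,36,120,120,120,120,37,42,39,40,41,120,120,48,120,120,120,120,49,54,51,52,53,120,120,60,120,120,120,120,61,62,67,64,65,120,120,120,73,120,120,72,120,74,79,76,77,120,120,120,85,120,120,84,120,86,91,88,89,120,120,120,96,120,120,95,120,100,98,99,120,120,104,120,120,120,105,108,107,120,120,111,120,120,114,113,120,116,120,120,118,120,119,120,120],[2,4,6,7,9,10,14,12,13,18,16,17,23,20,21,22,28,25,30,27,34,26,31,32,33,40,120,37,42,39,36,47,38,43,44,45,120,53,120,49,54,51,48,59,50,55,56,57,120,65,120,61,62,67,60,71,66,63,68,69,120,77,72,120,74,79,82,73,78,75,80,81,88,120,84,120,86,91,94,85,90,87,92,93,99,120,95,120,100,98,103,96,97,101,102,107,120,120,105,108,104,110,106,109,120,113,120,114,111,112,115,120,120,118,116,117,120,120,119,120],[3,5,7,8,10,11,12,13,15,16,17,19,20,22,23,24,25,27,28,29,31,32,33,34,35,37,38,39,40,41,42,43,44,45,47,46,48,49,50,51,53,52,54,55,57,56,58,59,60,61,6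3,62,64,65,67,66,68,69,70,71,73,72,74,75,76,77,78,79,80,81,83,82,84,85,86,87,89,88,90,91,93,92,94,120,95,96,98,97,99,120,101,100,102,120,103,105,104,106,120,107,108,120,109,110,111,120,112,113,114,115,120,116,117,120,118,120,119,120,120,120]]

def CWT : List (List Wd) := [[[],[],[0],[],[],[],[],[0,2],[0],[],[],[],[2],[1,0,2],[],[0,2],[],[],[],[],[1,2],[],[2,1,0,2],[2],[1,0,2],[],[],[],[],[],[],[1],[2],[2,1,0,2],[1,2],[0,1,0,2],[],[],[2],[],[],[],[],[],[1,2],[0,2,1,0,2],[0,1,2],[1],[],[],[1,2],[],[],[],[],[],[1,0,2,1,0,2],[1],[0,1],[],[],[],[],[1],[],[],[1],[],[1,0,2,1,0,2],[],[0,1],[],[],[],[],[],[],[],[1,2],[],[0,2,1,0,2],[],[1],[0,1,2],[],[],[],[],[],[],[2],[],[1],[0,1,0,2],[1,2],[],[],[1],[],[],[],[],[1,2],[2],[],[],[1,2],[],[],[2],[],[],[2],[],[],[],[],[],[],[]],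
[[],[],[],[2],[],[2],[0,1],[],[1,2],[0,1],[],[1,2],[0,1,2],[0],[0,1,2],[1],[0,1,2],[0],[0,1,0,2],[1],[0,1,0,2],[0,1,0,2],[0,2],[0,1],[],[0,1,0,2],[],[0,2],[0,2,1,0,2],[],[0,1,2],[0,2,1,0,2],[0,2,1,0,2],[1,0,2],[0,1],[],[],[0,2,1,0,2],[],[1,0,2],[1,0,2,1,0,2],[],[0,1],[1,0,2,1,0,2],[1,0,2,1,0,2],[0,1,0,2],[1],[0,1,2],[],[1,0,2,1,0,2],[],[0,1,0,2],[1],[1,0,2,1,0,2],[0,1],[1,0,2,1,0,2],[0,1,2],[1,0,2,1,0,2],[1,2],[0,1,0,2],[],[1,0,2,1,0,2],[0,1,2],[],[1,2],[0,2,1,0,2],[0,2,1,0,2],[0,1,2],[0,1],[0,2,1,0,2],[2],[1,0,2],[0,2,1,0,2],[],[0,1],[],[2],[2,1,0,2],[0,1,0,2],[0,1,0,2],[0,1],[2,1,0,2],[0,2],[],[0,1,0,2],[],[0,1],[],[2,1,0,2],[],[0,1,2],[1,0,2],[2,1,0,2],[0,1,2],[0],[0,1,2],[],[],[0,1,2]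,[1,0,2],[0,2],[0,1],[1,0,2],[],[],[0,1],[],[0,2],[0],[0,2],[],[],[],[0],[],[0],[],[],[],[]],
[[],[],[],[],[],[],[],[],[],[],[],[],[],[],[],[],[],[],[],[],[],[],[],[],[],[],[],[],[],[],[],[],[],[],[],[],[],[],[],[],[],[],[],[],[],[],[],[],[],[],[],[],[],[],[],[],[],[],[],[],[],[],[],[],[],[],[],[],[],[],[],[],[],[],[],[],[],[],[],[],[],[],[],[],[],[],[],[],[],[],[],[],[],[],[],[],[],[],[],[],[],[],[],[],[],[],[],[],[],[],[],[],[],[],[],[],[],[],[],[]]]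

def CIT : List (List (Fin 3)) := [[0,0,1,0,0,0,1,1,1,0,0,0,1,1,1,1,0,0,0,0,1,1,1,1,1,0,1,0,0,0,0,2,1,1,1,1,0,0,1,0,0,0,0,2,1,1,1,2,0,0,1,0,0,0,0,2,1,2,2,2,0,0,0,2,0,0,2,0,1,2,2,2,0,0,0,2,0,0,1,0,1,2,2,1,0,0,0,2,0,0,1,0,2,1,1,0,0,2,0,0,0,1,1,1,0,0,1,0,0,1,1,0,1,0,0,1,0,1,0,0],[1,1,0,1,0,1,2,0,1,2,0,1,1,1,1,2,1,1,1,2,1,1,1,2,2,1,0,1,1,2,1,1,1,1,2,2,0,1,0,1,1,2,2,1,1,1,2,1,0,1,0,1,2,1,2,1,1,1,1,1,0,1,1,0,1,1,1,1,2,1,1,1,1,0,2,0,1,1,1,1,2,1,1,1,1,0,2,0,1,1,1,1,1,1,1,1,0,0,1,1,1,2,1,0,0,2,0,1,1,1,0,0,0,1,0,1,0,0,0,0],[2,2,2,1,2,1,2,1,2,2,1,2,1,2,2,1,1,2,2,1,2,2,1,1,0,2,2,1,1,0,2,1,1,0,2,1,2,1,1,0,2,1,1,0,2,1,2,1,1,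0,2,1,2,1,2,1,2,1,1,0,2,1,2,1,1,0,2,1,1,0,2,1,2,1,1,0,2,1,1,0,2,1,2,0,1,0,2,1,2,0,2,1,2,0,1,2,1,2,0,1,2,0,1,2,2,0,1,2,1,2,0,1,2,0,2,0,2,0,0,0]]

def NFT : List Nat := [800667,697725,697761,694449,800613,793191,800577,794907,793215,697671,691707,694383,689991,689931,694263,698757,790449,790485,793041,797241,794937,794805,797493,791409,791373,691653,691617,699387,690183,690243,689853,699135,692619,692547,698811,698847,790395,797871,796155,796125,797211,797343,793719,793821,797601,797673,791463,795957,694929,694995,699447,699525,690321,693009,699057,699195,692727,695415,697005,697179,797847,798021,796257,793569,799899,800037,793851,791163,800289,800367,795771,795837,695115,690621,696759,696831,692877,692979,696369,696501,695313,695283,697029,689553,799653,799689,793461,793389,799977,790695,791025,791085,800229,792459,792495,690567,690531,696651,693963,694095,696399,692199,689643,689607,799599,795105,790773,790833,795225,792549,798513,692373,694065,699735,692349,699771,795291,798603,798567,699825]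
def wAt (k : ℕ) : Wd := W120T.getD k []
def nxtAt (i : Fin 3) (k : ℕ) : ℕ := (NXTT.getD i.val []).getD k 0
def certAt (i : Fin 3) (k : ℕ) : List (ℕ × Fin 3 × Fin 3) := (CERTT.getD i.val []).getD k []
def uAt (a : ℕ) : Wd := UWT.getD a []
def xAt (b : ℕ) : Wd := XWT.getD b []
def uixAt (a : ℕ) : ℕ := UIXT.getD a 0
def xixAt (b : ℕ) : ℕ := XIXT.getD b 0
def pairAt (a b : ℕ) : ℕ := (PAIRT.getD a []).getD b 0
def invaAt (k : ℕ) : ℕ := INVAT.getD k 0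
def invbAt (k : ℕ) : ℕ := INVBT.getD k 0
def codeAt (k : ℕ) (j : Fin 3) : ℕ := (CODET.getD k []).getD j.val 0
def boxAt (n : ℕ) : ℕ := BOXT.getD n 0
def sucAt (j : Fin 3) (k : ℕ) : ℕ := (SUCT.getD j.val []).getD k 0
def cwAt (j : Fin 3) (k : ℕ) : Wd := (CWT.getD j.val []).getD k []
def ciAt (j : Fin 3) (k : ℕ) : Fin 3 := (CIT.getD j.val []).getD k 0
def nfAt (k : ℕ) : ℕ := NFT.getD k 0
def maxb (j : Fin 3) : ℕ := if j = 0 then 1 else if j = 1 then 5 else 9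

set_option maxHeartbeats 1000000 in
theorem factA : ∀ i : Fin 3, ∀ k : Fin 120,
    applyMoves (certAt i k) (i :: wAt k) = some (wAt (nxtAt i k)) ∧
    nxtAt i k < 120 ∧ (wAt (nxtAt i k)).length ≤ (wAt k).length + 1 := by decide

theorem factEnc : ∀ k : Fin 120, encP (pg (wAt k)) = nfAt k := by decide
theorem factW0 : wAt 0 = [] ∧ W120T.length = 120 := by decide

theorem factNFinj : ∀ k j : Fin 120, nfAt k = nfAt j → k = j := by decide

theorem factUix : ∀ a : Fin 12, uixAt a < 120 ∧ encP (pg (uAt a)) = nfAt (uixAt a) ∧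
    (wAt (uixAt a)).length = (uAt a).length := by decide

theorem factXix : ∀ b : Fin 10, xixAt b < 120 ∧ encP (pg (xAt b)) = nfAt (xixAt b) ∧
    (wAt (xixAt b)).length = (xAt b).length := by decide

theorem factUixInj : ∀ a a' : Fin 12, uixAt a = uixAt a' → a = a' := by decide

theorem factPair : ∀ a : Fin 12, ∀ b : Fin 10, pairAt a b < 120 ∧
    encP (pg (uAt a ++ xAt b)) = nfAt (pairAt a b) ∧
    (wAt (pairAt a b)).length = (uAt a).length + (xAt b).length := by decide

theorem factPairInj : ∀ a a' : Fin 12, ∀ b b' : Fin 10,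
    pairAt a b = pairAt a' b' → a = a' ∧ b = b' := by decide

theorem factInv : ∀ k : Fin 120, invaAt k < 12 ∧ invbAt k < 10 ∧
    pairAt (invaAt k) (invbAt k) = k := by decide

theorem factCodePair : ∀ a : Fin 12, ∀ b : Fin 10,
    codeAt (pairAt a b) 0 = (if a.val < 6 then 0 else 1) ∧
    codeAt (pairAt a b) 1 = (if a.val < 6 then (uAt a).length else (uAt a).length - 1) ∧
    codeAt (pairAt a b) 2 = (xAt b).length := by decide

theorem factCodeInj : ∀ k j : Fin 120, codeAt k 0 = codeAt j 0 → codeAt k 1 = codeAt j 1 →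
    codeAt k 2 = codeAt j 2 → k = j := by decide

theorem factCodeBound : ∀ k : Fin 120, codeAt k 0 ≤ 1 ∧ codeAt k 1 ≤ 5 ∧ codeAt k 2 ≤ 9 := by
  decide

theorem factBox : ∀ n : Fin 120, boxAt n < 120 ∧ codeAt (boxAt n) 0 = n.val / 60 ∧
    codeAt (boxAt n) 1 = n.val % 60 / 10 ∧ codeAt (boxAt n) 2 = n.val % 10 := by decide

set_option maxHeartbeats 2000000 in
theorem factSuc : ∀ j : Fin 3, ∀ k : Fin 120, codeAt k j < maxb j →
    sucAt j k < 120 ∧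
    (∀ j' : Fin 3, codeAt (sucAt j k) j' = if j' = j then codeAt k j' + 1 else codeAt k j') ∧
    (wAt k).length + 1 = (wAt (sucAt j k)).length ∧
    pg (wAt k) * (pg (cwAt j k) * gp (ciAt j k) * (pg (cwAt j k))⁻¹) = pg (wAt (sucAt j k)) := by
  decide
open CoxeterSystem List

variable {V : Type*} [Group V] {M : CoxeterMatrix (Fin 3)} (cs : CoxeterSystem M V)

theorem cancel_prod (a : Fin 3) : cs.wordProd [a, a] = 1 := by
  rw [cs.wordProd_cons, cs.wordProd_singleton, cs.simple_mul_simple_self]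

theorem braid_prod (hM : ∀ a b : Fin 3, M.M a b = mval a b) (a b : Fin 3) :
    cs.wordProd (alternatingWord a b (mval a b)) = cs.wordProd (alternatingWord b a (mval a b)) := by
  calc cs.wordProd (alternatingWord a b (mval a b))
      = cs.wordProd (alternatingWord a b (M.M a b)) := by rw [hM a b]
    _ = cs.wordProd (alternatingWord b a (M.M b a)) := cs.wordProd_braidWord_eq a b
    _ = cs.wordProd (alternatingWord b a (mval a b)) := by
        rw [(M.symmetric b a).trans (hM a b)]

theorem applyMove_sound (hM : ∀ a b : Fin 3, M.M a b = mval a b) (mv : ℕ × Fin 3 × Fin 3)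
    {w w' : Wd} (h : applyMove mv w = some w') : cs.wordProd w = cs.wordProd w' := by
  obtain ⟨p, a, b⟩ := mv
  by_cases hab : a = b
  · subst hab
    simp only [applyMove, if_pos rfl, if_true, eq_self_iff_true] at h
    split at h
    next hc =>
      injection h with h
      subst h
      have hw : w = w.take p ++ ((w.drop p).take 2 ++ (w.drop p).drop 2) := by
        rw [List.take_append_drop, List.take_append_drop]
      conv_lhs => rw [hw, hc]
      simp [cs.wordProd_append, cs.wordProd_cons, cs.simple_mul_simple_cancel_left, mul_assoc]
    next => exact absurd h (by simp)
  · simp only [applyMove, if_neg hab] at h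
    split at h
    next hc =>
      injection h with h
      subst h
      have hw : w = w.take p ++ ((w.drop p).take (mval a b) ++ (w.drop p).drop (mval a b)) := by
        rw [List.take_append_drop, List.take_append_drop]
      conv_lhs => rw [hw, hc]
      simp only [cs.wordProd_append, mul_assoc]
      rw [braid_prod cs hM a b]
    next => exact absurd h (by simp)

theorem moves_sound (hM : ∀ a b : Fin 3, M.M a b = mval a b) :
    ∀ (c : List (ℕ × Fin 3 × Fin 3)) (w w' : Wd),
    applyMoves c w = some w' → cs.wordProd w = cs.wordProd w' := by
  intro c
  induction c with
  | nil => intro w w' h; injection h with h; rw [h]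
  | cons mv ms ih =>
    intro w w' h
    simp only [applyMoves] at h
    cases hh : applyMove mv w with
    | none => rw [hh] at h; exact absurd h (by simp)
    | some w1 => rw [hh] at h; exact (applyMove_sound cs hM mv hh).trans (ih w1 w' h)

theorem claimA' (hM : ∀ a b : Fin 3, M.M a b = mval a b) :
    ∀ w : Wd, ∃ k, k < 120 ∧ cs.wordProd w = cs.wordProd (wAt k) ∧
      (wAt k).length ≤ w.length := by
  intro w
  induction w with
  | nil => exact ⟨0, by norm_num, by rw [factW0.1], by rw [factW0.1]⟩
  | cons i w ih =>
    obtain ⟨k, hk, he, hl⟩ := ih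
    obtain ⟨hmv, hlt, hlen⟩ := factA i ⟨k, hk⟩
    have hmv' : applyMoves (certAt i k) (i :: wAt k) = some (wAt (nxtAt i k)) := hmv
    have hlt' : nxtAt i k < 120 := hlt
    have hlen' : (wAt (nxtAt i k)).length ≤ (wAt k).length + 1 := hlen
    refine ⟨nxtAt i k, hlt', ?_, ?_⟩
    · rw [cs.wordProd_cons, he, ← cs.wordProd_cons]
      exact moves_sound cs hM _ _ _ hmv'
    · simp only [List.length_cons]
      omega

theorem claimA (hM : ∀ a b : Fin 3, M.M a b = mval a b) (v : V) :
    ∃ k, k < 120 ∧ v = cs.wordProd (wAt k) := by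
  obtain ⟨w, rfl⟩ := cs.wordProd_surjective v
  obtain ⟨k, hk, he, -⟩ := claimA' cs hM w
  exact ⟨k, hk, he⟩

theorem hlift (hM : ∀ a b : Fin 3, M.M a b = mval a b) : M.IsLiftable gp := by
  intro i j
  show (gp i * gp j) ^ (M.M i j) = 1
  rw [hM i j]
  fin_cases i <;> fin_cases j <;> decide

theorem fpi (hM : ∀ a b : Fin 3, M.M a b = mval a b) (w : Wd) :
    cs.lift ⟨gp, hlift hM⟩ (cs.wordProd w) = pg w := by
  induction w with
  | nil => simp [pg]
  | cons i w ih =>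
    rw [cs.wordProd_cons, map_mul, ih, cs.lift_apply_simple]
    simp [pg]

theorem pgInj (k j : ℕ) (hk : k < 120) (hj : j < 120) (h : pg (wAt k) = pg (wAt j)) :
    k = j := by
  have h2 : nfAt k = nfAt j := by
    rw [← factEnc ⟨k, hk⟩, ← factEnc ⟨j, hj⟩]
    exact congrArg encP h
  exact congrArg Fin.val (factNFinj ⟨k, hk⟩ ⟨j, hj⟩ h2)

theorem elInj (hM : ∀ a b : Fin 3, M.M a b = mval a b) (k j : ℕ) (hk : k < 120) (hj : j < 120)
    (h : cs.wordProd (wAt k) = cs.wordProd (wAt j)) : k = j := by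
  have := congrArg (cs.lift ⟨gp, hlift hM⟩) h
  rw [fpi cs hM, fpi cs hM] at this
  exact pgInj k j hk hj this

theorem injW (hM : ∀ a b : Fin 3, M.M a b = mval a b) :
    Function.Injective (cs.lift ⟨gp, hlift hM⟩) := by
  intro v v' h
  obtain ⟨k, hk, rfl⟩ := claimA cs hM v
  obtain ⟨j, hj, rfl⟩ := claimA cs hM v'
  rw [fpi cs hM, fpi cs hM] at h
  rw [pgInj k j hk hj h]

theorem represent (hM : ∀ a b : Fin 3, M.M a b = mval a b) (w : Wd) (k : ℕ) (hk : k < 120)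
    (h : encP (pg w) = nfAt k) : cs.wordProd w = cs.wordProd (wAt k) := by
  obtain ⟨j, hj, he, -⟩ := claimA' cs hM w
  have hpg : pg w = pg (wAt j) := by
    have := congrArg (cs.lift ⟨gp, hlift hM⟩) he
    rwa [fpi cs hM, fpi cs hM] at this
  have h2 : nfAt j = nfAt k := by rw [← factEnc ⟨j, hj⟩, ← hpg, h]
  have hjk : j = k := congrArg Fin.val (factNFinj ⟨j, hj⟩ ⟨k, hk⟩ h2)
  rw [he, hjk]

theorem lenW (hM : ∀ a b : Fin 3, M.M a b = mval a b) (k : ℕ) (hk : k < 120) :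
    cs.length (cs.wordProd (wAt k)) = (wAt k).length := by
  refine le_antisymm (cs.length_wordProd_le _) ?_
  obtain ⟨ω, hlen, hπ⟩ := cs.exists_reduced_word (cs.wordProd (wAt k))
  obtain ⟨j, hj, he, hl⟩ := claimA' cs hM ω
  have hjk : j = k := elInj cs hM j k hj hk (he.symm.trans hπ.symm)
  subst hjk
  have hlen' := hlen.eq
  rw [← hπ] at hlen'
  omega

theorem uRep (hM : ∀ a b : Fin 3, M.M a b = mval a b) (a : ℕ) (ha : a < 12) :
    cs.wordProd (uAt a) = cs.wordProd (wAt (uixAt a)) :=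
  represent cs hM _ _ (factUix ⟨a, ha⟩).1 (factUix ⟨a, ha⟩).2.1

theorem xRep (hM : ∀ a b : Fin 3, M.M a b = mval a b) (b : ℕ) (hb : b < 10) :
    cs.wordProd (xAt b) = cs.wordProd (wAt (xixAt b)) :=
  represent cs hM _ _ (factXix ⟨b, hb⟩).1 (factXix ⟨b, hb⟩).2.1

theorem lenU (hM : ∀ a b : Fin 3, M.M a b = mval a b) (a : ℕ) (ha : a < 12) :
    cs.length (cs.wordProd (uAt a)) = (uAt a).length := by
  rw [uRep cs hM a ha, lenW cs hM _ (factUix ⟨a, ha⟩).1, (factUix ⟨a, ha⟩).2.2]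

theorem lenX (hM : ∀ a b : Fin 3, M.M a b = mval a b) (b : ℕ) (hb : b < 10) :
    cs.length (cs.wordProd (xAt b)) = (xAt b).length := by
  rw [xRep cs hM b hb, lenW cs hM _ (factXix ⟨b, hb⟩).1, (factXix ⟨b, hb⟩).2.2]

theorem pairProd (hM : ∀ a b : Fin 3, M.M a b = mval a b) (a b : ℕ) (ha : a < 12)
    (hb : b < 10) :
    cs.wordProd (uAt a) * cs.wordProd (xAt b) = cs.wordProd (wAt (pairAt a b)) := by
  rw [← cs.wordProd_append]
  exact represent cs hM _ _ (factPair ⟨a, ha⟩ ⟨b, hb⟩).1 (factPair ⟨a, ha⟩ ⟨b, hb⟩).2.1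

theorem sucStep (hM : ∀ a b : Fin 3, M.M a b = mval a b) (j : Fin 3) (k : ℕ) (hk : k < 120)
    (hc : codeAt k j < maxb j) :
    cs.wordProd (wAt k) *
      (cs.wordProd (cwAt j k) * cs.simple (ciAt j k) * (cs.wordProd (cwAt j k))⁻¹) =
      cs.wordProd (wAt (sucAt j k)) := by
  apply injW cs hM
  simp only [map_mul, map_inv, fpi cs hM, cs.lift_apply_simple]
  exact (factSuc j ⟨k, hk⟩ hc).2.2.2
end S13

/-- The Bruhat order on a Coxeter group. -/
def BruhatLE {B W : Type*} [Group W] {M : CoxeterMatrix B} (cs : CoxeterSystem M W) :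
    W → W → Prop :=
  Relation.ReflTransGen fun a b =>
    ∃ t : W, cs.IsReflection t ∧ b = a * t ∧ cs.length a < cs.length b

set_option maxHeartbeats 1000000 in
/-- Let `(H₃, S)` be the Coxeter system of type `H₃` with
`S = {s₁, s₂, s₃}`, `m(s₁,s₂) = 3`, `m(s₂,s₃) = 5`, `m(s₁,s₃) = 2`, and let `X`, `Y`,
`Z` be the three explicit chains below.  Then `Y` and `Z` are disjoint, every `w ∈ H₃`
factorizes uniquely as `w = u * x` with `u ∈ Y ∪ Z`, `x ∈ X`, the lengths add in every
such factorization, and the map `L : H₃ → {0,1} × {0,…,5} × {0,…,9}`,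
`L (u*x) = (0, ℓ u, ℓ x)` for `u ∈ Y` and `L (u*x) = (1, ℓ u - 1, ℓ x)` for `u ∈ Z`,
is a Lehmer code for `(H₃, S)`. -/
theorem statement13 {W : Type*} [Group W] {M : CoxeterMatrix (Fin 3)}
    (cs : CoxeterSystem M W)
    (hm12 : M.M 0 1 = 3) (hm23 : M.M 1 2 = 5) (hm13 : M.M 0 2 = 2)
    (s₁ s₂ s₃ : W) (hs1 : s₁ = cs.simple 0) (hs2 : s₂ = cs.simple 1)
    (hs3 : s₃ = cs.simple 2)
    (Xc Yc Zc : Set W)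
    (hX : Xc = {1, s₃, s₃*s₂, s₃*s₂*s₃, s₃*s₂*s₃*s₂, s₃*s₂*s₃*s₂*s₁, s₃*s₂*s₃*s₂*s₁*s₂,
      s₃*s₂*s₃*s₂*s₁*s₂*s₃, s₃*s₂*s₃*s₂*s₁*s₂*s₃*s₂, s₃*s₂*s₃*s₂*s₁*s₂*s₃*s₂*s₃})
    (hY : Yc = {1, s₂, s₂*s₁, s₃*s₂*s₁, s₂*s₃*s₂*s₁, s₁*s₂*s₃*s₂*s₁})
    (hZ : Zc = {s₁, s₁*s₂, s₁*s₂*s₁, s₁*s₃*s₂*s₁, s₂*s₁*s₃*s₂*s₁, s₁*s₂*s₁*s₃*s₂*s₁}) :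
    Yc ∩ Zc = ∅ ∧
    (∀ w : W, ∃ u x : W, u ∈ Yc ∪ Zc ∧ x ∈ Xc ∧ w = u * x ∧
      ∀ u' x' : W, u' ∈ Yc ∪ Zc → x' ∈ Xc → w = u' * x' → u' = u ∧ x' = x) ∧
    (∀ u ∈ Yc ∪ Zc, ∀ x ∈ Xc, cs.length (u * x) = cs.length u + cs.length x) ∧
    (∃ L : W → (Fin 3 → ℕ),
      (∀ u ∈ Yc, ∀ x ∈ Xc, L (u * x) = ![0, cs.length u, cs.length x]) ∧
      (∀ u ∈ Zc, ∀ x ∈ Xc, L (u * x) = ![1, cs.length u - 1, cs.length x]) ∧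
      Function.Injective L ∧
      (∀ w : W, L w 0 ≤ 1 ∧ L w 1 ≤ 5 ∧ L w 2 ≤ 9) ∧
      (∀ c : Fin 3 → ℕ, c 0 ≤ 1 → c 1 ≤ 5 → c 2 ≤ 9 → ∃ w, L w = c) ∧
      (∀ u v : W, L u ≤ L v → BruhatLE cs u v)) := by
  classical
  subst hs1 hs2 hs3
  have hM : ∀ a b : Fin 3, M.M a b = S13.mval a b := by
    intro a b
    fin_cases a <;> fin_cases b
    · exact M.diagonal 0
    · exact hm12
    · exact hm13
    · exact (M.symmetric 1 0).trans hm12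
    · exact M.diagonal 1
    · exact hm23
    · exact (M.symmetric 2 0).trans hm13
    · exact (M.symmetric 2 1).trans hm23
    · exact M.diagonal 2
  have hU0 : cs.wordProd (S13.uAt 0) = (1 : W) := by
    show cs.wordProd ([] : S13.Wd) = _
    exact cs.wordProd_nil
  have hU1 : cs.wordProd (S13.uAt 1) = cs.simple 1 := by
    show cs.wordProd ([1] : S13.Wd) = _
    exact cs.wordProd_singleton _
  have hU2 : cs.wordProd (S13.uAt 2) = cs.simple 1 * cs.simple 0 := by
    show cs.wordProd ([1,0] : S13.Wd) = _
    simp [CoxeterSystem.wordProd, mul_assoc]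
  have hU3 : cs.wordProd (S13.uAt 3) = cs.simple 2 * cs.simple 1 * cs.simple 0 := by
    show cs.wordProd ([2,1,0] : S13.Wd) = _
    simp [CoxeterSystem.wordProd, mul_assoc]
  have hU4 : cs.wordProd (S13.uAt 4) = cs.simple 1 * cs.simple 2 * cs.simple 1 * cs.simple 0 := by
    show cs.wordProd ([1,2,1,0] : S13.Wd) = _
    simp [CoxeterSystem.wordProd, mul_assoc]
  have hU5 : cs.wordProd (S13.uAt 5) = cs.simple 0 * cs.simple 1 * cs.simple 2 * cs.simple 1 * cs.simple 0 := by
    show cs.wordProd ([0,1,2,1,0] : S13.Wd) = _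
    simp [CoxeterSystem.wordProd, mul_assoc]
  have hU6 : cs.wordProd (S13.uAt 6) = cs.simple 0 := by
    show cs.wordProd ([0] : S13.Wd) = _
    exact cs.wordProd_singleton _
  have hU7 : cs.wordProd (S13.uAt 7) = cs.simple 0 * cs.simple 1 := by
    show cs.wordProd ([0,1] : S13.Wd) = _
    simp [CoxeterSystem.wordProd, mul_assoc]
  have hU8 : cs.wordProd (S13.uAt 8) = cs.simple 0 * cs.simple 1 * cs.simple 0 := by
    show cs.wordProd ([0,1,0] : S13.Wd) = _
    simp [CoxeterSystem.wordProd, mul_assoc]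
  have hU9 : cs.wordProd (S13.uAt 9) = cs.simple 0 * cs.simple 2 * cs.simple 1 * cs.simple 0 := by
    show cs.wordProd ([0,2,1,0] : S13.Wd) = _
    simp [CoxeterSystem.wordProd, mul_assoc]
  have hU10 : cs.wordProd (S13.uAt 10) = cs.simple 1 * cs.simple 0 * cs.simple 2 * cs.simple 1 * cs.simple 0 := by
    show cs.wordProd ([1,0,2,1,0] : S13.Wd) = _
    simp [CoxeterSystem.wordProd, mul_assoc]
  have hU11 : cs.wordProd (S13.uAt 11) = cs.simple 0 * cs.simple 1 * cs.simple 0 * cs.simple 2 * cs.simple 1 * cs.simple 0 := by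
    show cs.wordProd ([0,1,0,2,1,0] : S13.Wd) = _
    simp [CoxeterSystem.wordProd, mul_assoc]
  have hXp0 : cs.wordProd (S13.xAt 0) = (1 : W) := by
    show cs.wordProd ([] : S13.Wd) = _
    exact cs.wordProd_nil
  have hXp1 : cs.wordProd (S13.xAt 1) = cs.simple 2 := by
    show cs.wordProd ([2] : S13.Wd) = _
    exact cs.wordProd_singleton _
  have hXp2 : cs.wordProd (S13.xAt 2) = cs.simple 2 * cs.simple 1 := by
    show cs.wordProd ([2,1] : S13.Wd) = _
    simp [CoxeterSystem.wordProd, mul_assoc]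
  have hXp3 : cs.wordProd (S13.xAt 3) = cs.simple 2 * cs.simple 1 * cs.simple 2 := by
    show cs.wordProd ([2,1,2] : S13.Wd) = _
    simp [CoxeterSystem.wordProd, mul_assoc]
  have hXp4 : cs.wordProd (S13.xAt 4) = cs.simple 2 * cs.simple 1 * cs.simple 2 * cs.simple 1 := by
    show cs.wordProd ([2,1,2,1] : S13.Wd) = _
    simp [CoxeterSystem.wordProd, mul_assoc]
  have hXp5 : cs.wordProd (S13.xAt 5) = cs.simple 2 * cs.simple 1 * cs.simple 2 * cs.simple 1 * cs.simple 0 := by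
    show cs.wordProd ([2,1,2,1,0] : S13.Wd) = _
    simp [CoxeterSystem.wordProd, mul_assoc]
  have hXp6 : cs.wordProd (S13.xAt 6) = cs.simple 2 * cs.simple 1 * cs.simple 2 * cs.simple 1 * cs.simple 0 * cs.simple 1 := by
    show cs.wordProd ([2,1,2,1,0,1] : S13.Wd) = _
    simp [CoxeterSystem.wordProd, mul_assoc]
  have hXp7 : cs.wordProd (S13.xAt 7) = cs.simple 2 * cs.simple 1 * cs.simple 2 * cs.simple 1 * cs.simple 0 * cs.simple 1 * cs.simple 2 := by
    show cs.wordProd ([2,1,2,1,0,1,2] : S13.Wd) = _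
    simp [CoxeterSystem.wordProd, mul_assoc]
  have hXp8 : cs.wordProd (S13.xAt 8) = cs.simple 2 * cs.simple 1 * cs.simple 2 * cs.simple 1 * cs.simple 0 * cs.simple 1 * cs.simple 2 * cs.simple 1 := by
    show cs.wordProd ([2,1,2,1,0,1,2,1] : S13.Wd) = _
    simp [CoxeterSystem.wordProd, mul_assoc]
  have hXp9 : cs.wordProd (S13.xAt 9) = cs.simple 2 * cs.simple 1 * cs.simple 2 * cs.simple 1 * cs.simple 0 * cs.simple 1 * cs.simple 2 * cs.simple 1 * cs.simple 2 := by
    show cs.wordProd ([2,1,2,1,0,1,2,1,2] : S13.Wd) = _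
    simp [CoxeterSystem.wordProd, mul_assoc]
  have hYmem : ∀ u, u ∈ Yc → ∃ a, a < 6 ∧ u = cs.wordProd (S13.uAt a) := by
    intro u hu
    rw [hY] at hu
    simp only [Set.mem_insert_iff, Set.mem_singleton_iff] at hu
    rcases hu with h|h|h|h|h|h
    · exact ⟨0, by norm_num, h.trans hU0.symm⟩
    · exact ⟨1, by norm_num, h.trans hU1.symm⟩
    · exact ⟨2, by norm_num, h.trans hU2.symm⟩
    · exact ⟨3, by norm_num, h.trans hU3.symm⟩
    · exact ⟨4, by norm_num, h.trans hU4.symm⟩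
    · exact ⟨5, by norm_num, h.trans hU5.symm⟩
  have hZmem : ∀ u, u ∈ Zc → ∃ a, 6 ≤ a ∧ a < 12 ∧ u = cs.wordProd (S13.uAt a) := by
    intro u hu
    rw [hZ] at hu
    simp only [Set.mem_insert_iff, Set.mem_singleton_iff] at hu
    rcases hu with h|h|h|h|h|h
    · exact ⟨6, by norm_num, by norm_num, h.trans hU6.symm⟩
    · exact ⟨7, by norm_num, by norm_num, h.trans hU7.symm⟩
    · exact ⟨8, by norm_num, by norm_num, h.trans hU8.symm⟩
    · exact ⟨9, by norm_num, by norm_num, h.trans hU9.symm⟩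
    · exact ⟨10, by norm_num, by norm_num, h.trans hU10.symm⟩
    · exact ⟨11, by norm_num, by norm_num, h.trans hU11.symm⟩
  have hXmem : ∀ x, x ∈ Xc → ∃ b, b < 10 ∧ x = cs.wordProd (S13.xAt b) := by
    intro x hx
    rw [hX] at hx
    simp only [Set.mem_insert_iff, Set.mem_singleton_iff] at hx
    rcases hx with h|h|h|h|h|h|h|h|h|h
    · exact ⟨0, by norm_num, h.trans hXp0.symm⟩
    · exact ⟨1, by norm_num, h.trans hXp1.symm⟩
    · exact ⟨2, by norm_num, h.trans hXp2.symm⟩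
    · exact ⟨3, by norm_num, h.trans hXp3.symm⟩
    · exact ⟨4, by norm_num, h.trans hXp4.symm⟩
    · exact ⟨5, by norm_num, h.trans hXp5.symm⟩
    · exact ⟨6, by norm_num, h.trans hXp6.symm⟩
    · exact ⟨7, by norm_num, h.trans hXp7.symm⟩
    · exact ⟨8, by norm_num, h.trans hXp8.symm⟩
    · exact ⟨9, by norm_num, h.trans hXp9.symm⟩
  have hYmem' : ∀ a, a < 6 → cs.wordProd (S13.uAt a) ∈ Yc := by
    intro a ha
    rw [hY]
    interval_cases a
    · rw [hU0]; simp
    · rw [hU1]; simp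
    · rw [hU2]; simp
    · rw [hU3]; simp
    · rw [hU4]; simp
    · rw [hU5]; simp
  have hZmem' : ∀ a, 6 ≤ a → a < 12 → cs.wordProd (S13.uAt a) ∈ Zc := by
    intro a ha1 ha2
    rw [hZ]
    interval_cases a
    · rw [hU6]; simp
    · rw [hU7]; simp
    · rw [hU8]; simp
    · rw [hU9]; simp
    · rw [hU10]; simp
    · rw [hU11]; simp
  have hXmem' : ∀ b, b < 10 → cs.wordProd (S13.xAt b) ∈ Xc := by
    intro b hb
    rw [hX]
    interval_cases b
    · rw [hXp0]; simp
    · rw [hXp1]; simp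
    · rw [hXp2]; simp
    · rw [hXp3]; simp
    · rw [hXp4]; simp
    · rw [hXp5]; simp
    · rw [hXp6]; simp
    · rw [hXp7]; simp
    · rw [hXp8]; simp
    · rw [hXp9]; simp
  -- umbrella membership lemma
  have hUmem : ∀ u, u ∈ Yc ∪ Zc → ∃ a, a < 12 ∧ u = cs.wordProd (S13.uAt a) := by
    intro u hu
    rcases hu with hu | hu
    · obtain ⟨a, ha, he⟩ := hYmem u hu
      exact ⟨a, by omega, he⟩
    · obtain ⟨a, ha1, ha2, he⟩ := hZmem u hu
      exact ⟨a, ha2, he⟩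
  -- index uniqueness machinery
  have hKex : ∀ v : W, ∃ k : Fin 120, v = cs.wordProd (S13.wAt k) := by
    intro v
    obtain ⟨k, hk, he⟩ := S13.claimA cs hM v
    exact ⟨⟨k, hk⟩, he⟩
  choose KF hKF using hKex
  have hKuniq : ∀ (v : W) (k : ℕ), k < 120 → v = cs.wordProd (S13.wAt k) → (KF v : ℕ) = k := by
    intro v k hk he
    exact S13.elInj cs hM _ _ (KF v).2 hk ((hKF v).symm.trans he)
  refine ⟨?_, ?_, ?_, ?_⟩
  -- Part 1 : disjointness
  · apply Set.eq_empty_iff_forall_notMem.mpr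
    rintro w ⟨hw1, hw2⟩
    obtain ⟨a, ha, hwa⟩ := hYmem w hw1
    obtain ⟨b, hb1, hb2, hwb⟩ := hZmem w hw2
    have h1 : cs.wordProd (S13.uAt a) = cs.wordProd (S13.uAt b) := hwa ▸ hwb ▸ rfl
    have h2 : cs.wordProd (S13.wAt (S13.uixAt a)) = cs.wordProd (S13.wAt (S13.uixAt b)) := by
      rw [← S13.uRep cs hM a (by omega), ← S13.uRep cs hM b (by omega), h1]
    have ha12 : a < 12 := by omega
    have h3 := S13.elInj cs hM _ _ (S13.factUix ⟨a, ha12⟩).1 (S13.factUix ⟨b, hb2⟩).1 h2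
    have h4 : a = b := congrArg Fin.val (S13.factUixInj ⟨a, ha12⟩ ⟨b, hb2⟩ h3)
    omega
  -- Part 2 : unique factorization
  · intro w
    obtain ⟨k, hk, rfl⟩ := S13.claimA cs hM w
    have hfi := S13.factInv ⟨k, hk⟩
    have ha : S13.invaAt k < 12 := hfi.1
    have hb : S13.invbAt k < 10 := hfi.2.1
    have hpk : S13.pairAt (S13.invaAt k) (S13.invbAt k) = k := hfi.2.2
    refine ⟨cs.wordProd (S13.uAt (S13.invaAt k)), cs.wordProd (S13.xAt (S13.invbAt k)), ?_, ?_, ?_, ?_⟩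
    · by_cases h6 : S13.invaAt k < 6
      · exact Set.mem_union_left _ (hYmem' _ h6)
      · exact Set.mem_union_right _ (hZmem' _ (by omega) ha)
    · exact hXmem' _ hb
    · rw [S13.pairProd cs hM _ _ ha hb, hpk]
    · intro u' x' hu' hx' heq
      obtain ⟨a', ha', rfl⟩ := hUmem u' hu'
      obtain ⟨b', hb', rfl⟩ := hXmem x' hx'
      rw [S13.pairProd cs hM _ _ ha' hb'] at heq
      have hkk : S13.pairAt a' b' = S13.pairAt (S13.invaAt k) (S13.invbAt k) := by
        rw [hpk]
        exact (S13.elInj cs hM _ _ hk (S13.factPair ⟨a', ha'⟩ ⟨b', hb'⟩).1 heq).symm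
      obtain ⟨hfa, hfb⟩ := S13.factPairInj ⟨a', ha'⟩ ⟨S13.invaAt k, ha⟩ ⟨b', hb'⟩ ⟨S13.invbAt k, hb⟩ hkk
      have hfa' : a' = S13.invaAt k := congrArg Fin.val hfa
      have hfb' : b' = S13.invbAt k := congrArg Fin.val hfb
      rw [hfa', hfb']
      exact ⟨rfl, rfl⟩
  -- Part 3 : lengths add
  · intro u hu x hx
    obtain ⟨a, ha, rfl⟩ := hUmem u hu
    obtain ⟨b, hb, rfl⟩ := hXmem x hx
    calc cs.length (cs.wordProd (S13.uAt a) * cs.wordProd (S13.xAt b))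
        = cs.length (cs.wordProd (S13.wAt (S13.pairAt a b))) := by
          rw [S13.pairProd cs hM a b ha hb]
      _ = (S13.wAt (S13.pairAt a b)).length := S13.lenW cs hM _ (S13.factPair ⟨a, ha⟩ ⟨b, hb⟩).1
      _ = (S13.uAt a).length + (S13.xAt b).length := (S13.factPair ⟨a, ha⟩ ⟨b, hb⟩).2.2
      _ = cs.length (cs.wordProd (S13.uAt a)) + cs.length (cs.wordProd (S13.xAt b)) := by
          rw [S13.lenU cs hM a ha, S13.lenX cs hM b hb]
  -- Part 4 : the Lehmer code
  · refine ⟨fun v => S13.codeAt (KF v), ?_, ?_, ?_, ?_, ?_, ?_⟩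
    -- (a) value on Y * X
    · intro u hu x hx
      obtain ⟨a, ha6, rfl⟩ := hYmem u hu
      have ha : a < 12 := by omega
      obtain ⟨b, hb, rfl⟩ := hXmem x hx
      have hk' : (KF (cs.wordProd (S13.uAt a) * cs.wordProd (S13.xAt b)) : ℕ) = S13.pairAt a b :=
        hKuniq _ _ (S13.factPair ⟨a, ha⟩ ⟨b, hb⟩).1 (S13.pairProd cs hM a b ha hb)
      have hc0 : S13.codeAt (S13.pairAt a b) 0 = if a < 6 then 0 else 1 :=
        (S13.factCodePair ⟨a, ha⟩ ⟨b, hb⟩).1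
      have hc1 : S13.codeAt (S13.pairAt a b) 1 =
          if a < 6 then (S13.uAt a).length else (S13.uAt a).length - 1 :=
        (S13.factCodePair ⟨a, ha⟩ ⟨b, hb⟩).2.1
      have hc2 : S13.codeAt (S13.pairAt a b) 2 = (S13.xAt b).length :=
        (S13.factCodePair ⟨a, ha⟩ ⟨b, hb⟩).2.2
      funext j
      fin_cases j
      · show S13.codeAt (KF _) 0 = _
        rw [hk', hc0, if_pos ha6]
        simp
      · show S13.codeAt (KF _) 1 = _
        rw [hk', hc1, if_pos ha6, ← S13.lenU cs hM a ha]
        simp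
      · show S13.codeAt (KF _) 2 = _
        rw [hk', hc2, ← S13.lenX cs hM b hb]
        simp
    -- (b) value on Z * X
    · intro u hu x hx
      obtain ⟨a, ha6, ha, rfl⟩ := hZmem u hu
      obtain ⟨b, hb, rfl⟩ := hXmem x hx
      have hk' : (KF (cs.wordProd (S13.uAt a) * cs.wordProd (S13.xAt b)) : ℕ) = S13.pairAt a b :=
        hKuniq _ _ (S13.factPair ⟨a, ha⟩ ⟨b, hb⟩).1 (S13.pairProd cs hM a b ha hb)
      have hc0 : S13.codeAt (S13.pairAt a b) 0 = if a < 6 then 0 else 1 :=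
        (S13.factCodePair ⟨a, ha⟩ ⟨b, hb⟩).1
      have hc1 : S13.codeAt (S13.pairAt a b) 1 =
          if a < 6 then (S13.uAt a).length else (S13.uAt a).length - 1 :=
        (S13.factCodePair ⟨a, ha⟩ ⟨b, hb⟩).2.1
      have hc2 : S13.codeAt (S13.pairAt a b) 2 = (S13.xAt b).length :=
        (S13.factCodePair ⟨a, ha⟩ ⟨b, hb⟩).2.2
      have hnot : ¬ a < 6 := by omega
      funext j
      fin_cases j
      · show S13.codeAt (KF _) 0 = _
        rw [hk', hc0, if_neg hnot]
        simp
      · show S13.codeAt (KF _) 1 = _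
        rw [hk', hc1, if_neg hnot, ← S13.lenU cs hM a ha]
        simp
      · show S13.codeAt (KF _) 2 = _
        rw [hk', hc2, ← S13.lenX cs hM b hb]
        simp
    -- (c) injectivity
    · intro v v' h
      have h0 := congrFun h 0
      have h1 := congrFun h 1
      have h2 := congrFun h 2
      have : KF v = KF v' := S13.factCodeInj (KF v) (KF v') h0 h1 h2
      rw [hKF v, hKF v', this]
    -- (d) bounds
    · intro w
      exact S13.factCodeBound (KF w)
    -- (e) surjectivity onto the box
    · intro c h0 h1 h2
      have hn : c 0 * 60 + c 1 * 10 + c 2 < 120 := by omega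
      have hb := S13.factBox ⟨c 0 * 60 + c 1 * 10 + c 2, hn⟩
      have hb1 : S13.boxAt (c 0 * 60 + c 1 * 10 + c 2) < 120 := hb.1
      have hb2 : S13.codeAt (S13.boxAt (c 0 * 60 + c 1 * 10 + c 2)) 0 =
          (c 0 * 60 + c 1 * 10 + c 2) / 60 := hb.2.1
      have hb3 : S13.codeAt (S13.boxAt (c 0 * 60 + c 1 * 10 + c 2)) 1 =
          (c 0 * 60 + c 1 * 10 + c 2) % 60 / 10 := hb.2.2.1
      have hb4 : S13.codeAt (S13.boxAt (c 0 * 60 + c 1 * 10 + c 2)) 2 =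
          (c 0 * 60 + c 1 * 10 + c 2) % 10 := hb.2.2.2
      refine ⟨cs.wordProd (S13.wAt (S13.boxAt (c 0 * 60 + c 1 * 10 + c 2))), ?_⟩
      have hkk : (KF (cs.wordProd (S13.wAt (S13.boxAt (c 0 * 60 + c 1 * 10 + c 2)))) : ℕ) =
          S13.boxAt (c 0 * 60 + c 1 * 10 + c 2) := hKuniq _ _ hb1 rfl
      funext j
      fin_cases j
      · show S13.codeAt (KF _) 0 = c 0
        rw [hkk, hb2]
        omega
      · show S13.codeAt (KF _) 1 = c 1
        rw [hkk, hb3]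
        omega
      · show S13.codeAt (KF _) 2 = c 2
        rw [hkk, hb4]
        omega
    -- (f) order preservation into Bruhat order
    · have hstep : ∀ (j : Fin 3) (k : ℕ) (hk : k < 120), S13.codeAt k j < S13.maxb j →
          (∃ t, cs.IsReflection t ∧
            cs.wordProd (S13.wAt (S13.sucAt j k)) = cs.wordProd (S13.wAt k) * t ∧
            cs.length (cs.wordProd (S13.wAt k)) <
              cs.length (cs.wordProd (S13.wAt (S13.sucAt j k)))) := by
        intro j k hk hc
        refine ⟨_, ⟨cs.wordProd (S13.cwAt j k), S13.ciAt j k, rfl⟩,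
          (S13.sucStep cs hM j k hk hc).symm, ?_⟩
        have hs1' : S13.sucAt j k < 120 := (S13.factSuc j ⟨k, hk⟩ hc).1
        have h3 : (S13.wAt k).length + 1 = (S13.wAt (S13.sucAt j k)).length :=
          (S13.factSuc j ⟨k, hk⟩ hc).2.2.1
        have h1 := S13.lenW cs hM k hk
        have h2 := S13.lenW cs hM _ hs1'
        omega
      have climb : ∀ d k k' : ℕ, k < 120 → k' < 120 →
          (∀ j : Fin 3, S13.codeAt k j ≤ S13.codeAt k' j) →
          S13.codeAt k' 0 + S13.codeAt k' 1 + S13.codeAt k' 2 ≤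
            S13.codeAt k 0 + S13.codeAt k 1 + S13.codeAt k 2 + d →
          BruhatLE cs (cs.wordProd (S13.wAt k)) (cs.wordProd (S13.wAt k')) := by
        intro d
        induction d with
        | zero =>
          intro k k' hk hk' hle hsum
          have g0 := hle 0
          have g1 := hle 1
          have g2 := hle 2
          have e0 : S13.codeAt k 0 = S13.codeAt k' 0 := by omega
          have e1 : S13.codeAt k 1 = S13.codeAt k' 1 := by omega
          have e2 : S13.codeAt k 2 = S13.codeAt k' 2 := by omega
          have hkk : k = k' := congrArg Fin.val (S13.factCodeInj ⟨k, hk⟩ ⟨k', hk'⟩ e0 e1 e2)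
          rw [hkk]
          exact Relation.ReflTransGen.refl
        | succ d ih =>
          intro k k' hk hk' hle hsum
          have hbnd := S13.factCodeBound ⟨k', hk'⟩
          have hbnd0 : S13.codeAt k' 0 ≤ 1 := hbnd.1
          have hbnd1 : S13.codeAt k' 1 ≤ 5 := hbnd.2.1
          have hbnd2 : S13.codeAt k' 2 ≤ 9 := hbnd.2.2
          have dostep : ∀ j : Fin 3, S13.codeAt k j < S13.codeAt k' j →
              S13.codeAt k j < S13.maxb j →
              BruhatLE cs (cs.wordProd (S13.wAt k)) (cs.wordProd (S13.wAt k')) := by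
            intro j hcj hmax
            have hs1' : S13.sucAt j k < 120 := (S13.factSuc j ⟨k, hk⟩ hmax).1
            have hupd : ∀ j' : Fin 3, S13.codeAt (S13.sucAt j k) j' =
                if j' = j then S13.codeAt k j' + 1 else S13.codeAt k j' :=
              (S13.factSuc j ⟨k, hk⟩ hmax).2.1
            have hle' : ∀ j' : Fin 3, S13.codeAt (S13.sucAt j k) j' ≤ S13.codeAt k' j' := by
              intro j'
              rw [hupd j']
              by_cases hjj : j' = j
              · rw [if_pos hjj, hjj]
                omega
              · rw [if_neg hjj]
                exact hle j'
            have hsum' : S13.codeAt (S13.sucAt j k) 0 + S13.codeAt (S13.sucAt j k) 1 +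
                S13.codeAt (S13.sucAt j k) 2 =
                S13.codeAt k 0 + S13.codeAt k 1 + S13.codeAt k 2 + 1 := by
              rw [hupd 0, hupd 1, hupd 2]
              fin_cases j <;> simp <;> omega
            obtain ⟨t, ht, heq, hlt⟩ := hstep j k hk hmax
            exact Relation.ReflTransGen.head ⟨t, ht, heq, hlt⟩
              (ih (S13.sucAt j k) k' hs1' hk' hle' (by omega))
          by_cases c0 : S13.codeAt k 0 < S13.codeAt k' 0
          · refine dostep 0 c0 ?_
            show S13.codeAt k 0 < 1
            omega
          · by_cases c1 : S13.codeAt k 1 < S13.codeAt k' 1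
            · refine dostep 1 c1 ?_
              show S13.codeAt k 1 < 5
              omega
            · by_cases c2 : S13.codeAt k 2 < S13.codeAt k' 2
              · refine dostep 2 c2 ?_
                show S13.codeAt k 2 < 9
                omega
              · have g0 := hle 0
                have g1 := hle 1
                have g2 := hle 2
                have e0 : S13.codeAt k 0 = S13.codeAt k' 0 := by omega
                have e1 : S13.codeAt k 1 = S13.codeAt k' 1 := by omega
                have e2 : S13.codeAt k 2 = S13.codeAt k' 2 := by omega
                have hkk : k = k' :=
                  congrArg Fin.val (S13.factCodeInj ⟨k, hk⟩ ⟨k', hk'⟩ e0 e1 e2)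
                rw [hkk]
                exact Relation.ReflTransGen.refl
      intro u v huv
      have hj : ∀ j : Fin 3, S13.codeAt (KF u) j ≤ S13.codeAt (KF v) j := fun j => huv j
      have hbu := S13.factCodeBound (KF u)
      have hbv := S13.factCodeBound (KF v)
      rw [hKF u, hKF v]
      refine climb 15 (KF u) (KF v) (KF u).2 (KF v).2 hj ?_
      have b1 := hbv.1
      have b2 := hbv.2.1
      have b3 := hbv.2.2
      omega
end

section
/- Let w ∈ S_n be a permutation avoiding the pattern 312, and define c(w)_k := #{i : i < k, w^{-1}(i) > w^{-1}(k)} for k ∈ [n]. Then the Poincaré polynomial of the lower Bruhat interval of w factorizes as Σ_{v ≤ w} q^{inv(v)} = ∏_{k=1}^{n} [c(w)_k + 1]_q. -/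
open Polynomial

/-- The number of inversions of a permutation of `Fin n` (its Coxeter length). -/
def invNum {n : ℕ} (w : Equiv.Perm (Fin n)) : ℕ :=
  (Finset.univ.filter fun p : Fin n × Fin n => p.1 < p.2 ∧ w p.2 < w p.1).card

/-- The Bruhat order on the symmetric group. -/
def PermBruhatLE {n : ℕ} : Equiv.Perm (Fin n) → Equiv.Perm (Fin n) → Prop :=
  Relation.ReflTransGen fun a b =>
    ∃ x y : Fin n, x ≠ y ∧ b = a * Equiv.swap x y ∧ invNum a < invNum b

/-- The code `c(w) k = #{i : i < k, w⁻¹ i > w⁻¹ k}`. -/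
def codeOf {n : ℕ} (w : Equiv.Perm (Fin n)) (k : Fin n) : ℕ :=
  (Finset.univ.filter fun i : Fin n => i < k ∧ w.symm k < w.symm i).card

/-- `w` avoids the pattern `312`. -/
def Avoids312 {n : ℕ} (w : Equiv.Perm (Fin n)) : Prop :=
  ¬ ∃ i₁ i₂ i₃ : Fin n, i₁ < i₂ ∧ i₂ < i₃ ∧ w i₂ < w i₃ ∧ w i₃ < w i₁

set_option linter.unusedSectionVars false

open Finset

lemma card_filter_fin_lt {n : ℕ} (k : Fin n) :
    ((univ : Finset (Fin n)).filter fun i => i < k).card = k.val := by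
  have : ((univ : Finset (Fin n)).filter fun i => i < k) = Finset.Iio k := by
    ext i; simp
  rw [this, Fin.card_Iio]

lemma codeOf_le {n : ℕ} (w : Equiv.Perm (Fin n)) (k : Fin n) : codeOf w k ≤ k.val := by
  rw [← card_filter_fin_lt k]
  apply Finset.card_le_card
  intro i hi
  simp only [Finset.mem_filter, Finset.mem_univ, true_and] at hi ⊢
  exact hi.1

lemma sum_codeOf {n : ℕ} (w : Equiv.Perm (Fin n)) : ∑ k, codeOf w k = invNum w := by
  unfold codeOf invNum
  rw [← Finset.card_sigma]
  apply Finset.card_nbij' (i := fun s => (w.symm s.1, w.symm s.2))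
    (j := fun p => ⟨w p.1, w p.2⟩)
  · rintro ⟨k, i⟩ hs
    simp only [Finset.mem_sigma, Finset.mem_filter, Finset.mem_univ, true_and,
      Finset.mem_coe] at hs ⊢
    exact ⟨hs.2, by simpa using hs.1⟩
  · rintro ⟨p₁, p₂⟩ hp
    simp only [Finset.mem_sigma, Finset.mem_filter, Finset.mem_univ, true_and,
      Finset.mem_coe] at hp ⊢
    exact ⟨hp.2, by simpa using hp.1⟩
  · rintro ⟨k, i⟩ _; simp
  · rintro ⟨p₁, p₂⟩ _; simp

lemma mul_swap_symm_apply {n : ℕ} (a : Equiv.Perm (Fin n)) (x y i : Fin n) :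
    (a * Equiv.swap x y).symm i = Equiv.swap x y (a.symm i) := by
  rw [Equiv.symm_apply_eq]
  simp [Equiv.Perm.mul_apply]

section Swap

variable {n : ℕ} {a b : Equiv.Perm (Fin n)} {p q : Fin n}

/-- The extra set for the code change at coordinate `p`. -/
def Sset (a : Equiv.Perm (Fin n)) (p q : Fin n) : Finset (Fin n) :=
  Finset.univ.filter fun i => i < p ∧ a.symm p < a.symm i ∧ a.symm i < a.symm q

variable (hpq : p < q) (hxy : a.symm p < a.symm q)
  (hb : b = a * Equiv.swap (a.symm p) (a.symm q))

include hb

lemma posb_p : b.symm p = a.symm q := by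
  rw [hb, mul_swap_symm_apply, Equiv.swap_apply_left]

lemma posb_q : b.symm q = a.symm p := by
  rw [hb, mul_swap_symm_apply, Equiv.swap_apply_right]

lemma posb_other {i : Fin n} (hip : i ≠ p) (hiq : i ≠ q) : b.symm i = a.symm i := by
  rw [hb, mul_swap_symm_apply, Equiv.swap_apply_of_ne_of_ne]
  · exact fun h => hip (a.symm.injective h)
  · exact fun h => hiq (a.symm.injective h)

include hpq

lemma code_lt_p {k : Fin n} (hk : k < p) : codeOf b k = codeOf a k := by
  unfold codeOf
  congr 1
  apply Finset.filter_congr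
  intro i _
  constructor <;> rintro ⟨h1, h2⟩ <;> refine ⟨h1, ?_⟩
  · rwa [posb_other hb (h1.trans hk).ne (h1.trans (hk.trans hpq)).ne,
      posb_other hb hk.ne (hk.trans hpq).ne] at h2
  · rwa [posb_other hb (h1.trans hk).ne (h1.trans (hk.trans hpq)).ne,
      posb_other hb hk.ne (hk.trans hpq).ne]

lemma code_gt_q {k : Fin n} (hk : q < k) : codeOf b k = codeOf a k := by
  have hkp : k ≠ p := (hpq.trans hk).ne'
  have hkq : k ≠ q := hk.ne'
  have key : ∀ i : Fin n, a.symm (Equiv.swap p q i) = b.symm i := by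
    intro i
    rcases eq_or_ne i p with rfl | hip
    · rw [Equiv.swap_apply_left, ← posb_p hb]
    rcases eq_or_ne i q with rfl | hiq
    · rw [Equiv.swap_apply_right, ← posb_q hb]
    · rw [Equiv.swap_apply_of_ne_of_ne hip hiq, posb_other hb hip hiq]
  have key2 : ∀ i : Fin n, b.symm (Equiv.swap p q i) = a.symm i := by
    intro i
    have := key (Equiv.swap p q i)
    rw [Equiv.swap_apply_self] at this
    exact this.symm
  have hlt : ∀ i : Fin n, i < k → Equiv.swap p q i < k := by
    intro i hi
    rcases eq_or_ne i p with rfl | hip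
    · rwa [Equiv.swap_apply_left]
    rcases eq_or_ne i q with rfl | hiq
    · rw [Equiv.swap_apply_right]; exact hpq.trans hk
    · rwa [Equiv.swap_apply_of_ne_of_ne hip hiq]
  unfold codeOf
  apply Finset.card_nbij' (i := fun i => Equiv.swap p q i) (j := fun i => Equiv.swap p q i)
  · intro i hi
    simp only [mem_filter, mem_univ, true_and, mem_coe] at hi ⊢
    refine ⟨hlt i hi.1, ?_⟩
    rw [key i, ← posb_other hb hkp hkq]
    exact hi.2
  · intro i hi
    simp only [mem_filter, mem_univ, true_and, mem_coe] at hi ⊢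
    refine ⟨hlt i hi.1, ?_⟩
    rw [key2 i, posb_other hb hkp hkq]
    exact hi.2
  · intro i _; exact Equiv.swap_apply_self _ _ _
  · intro i _; exact Equiv.swap_apply_self _ _ _

include hxy

lemma code_mid_le {k : Fin n} (h1 : p < k) (h2 : k < q) : codeOf a k ≤ codeOf b k := by
  apply Finset.card_le_card
  intro i hi
  simp only [mem_filter, mem_univ, true_and] at hi ⊢
  obtain ⟨hik, hcond⟩ := hi
  refine ⟨hik, ?_⟩
  have hbk : b.symm k = a.symm k := posb_other hb h1.ne' h2.ne
  rcases eq_or_ne i p with rfl | hip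
  · rw [hbk, posb_p hb]
    exact hcond.trans hxy
  · rw [hbk, posb_other hb hip (hik.trans h2).ne]
    exact hcond

lemma code_p : codeOf a p = codeOf b p + (Sset a p q).card := by
  have hdis : Disjoint (univ.filter fun i => i < p ∧ b.symm p < b.symm i) (Sset a p q) := by
    rw [Finset.disjoint_left]
    intro i hi hi'
    simp only [Sset, mem_filter, mem_univ, true_and] at hi hi'
    rw [posb_p hb, posb_other hb hi.1.ne (hi.1.trans hpq).ne] at hi
    exact absurd hi.2 (not_lt.mpr hi'.2.2.le)
  have hun : (univ.filter fun i => i < p ∧ a.symm p < a.symm i)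
      = (univ.filter fun i => i < p ∧ b.symm p < b.symm i) ∪ Sset a p q := by
    ext i
    simp only [Sset, mem_filter, mem_univ, true_and, mem_union]
    constructor
    · rintro ⟨h1, h2⟩
      have hne : a.symm i ≠ a.symm q := fun h => (h1.trans hpq).ne (a.symm.injective h)
      rcases lt_or_gt_of_ne hne with hlt | hgt
      · exact Or.inr ⟨h1, h2, hlt⟩
      · exact Or.inl ⟨h1, by
          rw [posb_p hb, posb_other hb h1.ne (h1.trans hpq).ne]; exact hgt⟩
    · rintro (⟨h1, h2⟩ | ⟨h1, h2, _⟩)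
      · rw [posb_p hb, posb_other hb h1.ne (h1.trans hpq).ne] at h2
        exact ⟨h1, hxy.trans h2⟩
      · exact ⟨h1, h2⟩
  unfold codeOf
  rw [hun, card_union_of_disjoint hdis]

lemma code_q_ge : codeOf a q + 1 + (Sset a p q).card ≤ codeOf b q := by
  classical
  set Fa := (univ.filter fun i : Fin n => i < q ∧ a.symm q < a.symm i) with hFa
  have hdis : Disjoint Fa (Sset a p q) := by
    rw [Finset.disjoint_left]
    intro i hi hi'
    simp only [hFa, Sset, mem_filter, mem_univ, true_and] at hi hi'
    exact absurd hi.2 (not_lt.mpr hi'.2.2.le)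
  have hpnot : p ∉ Fa ∪ Sset a p q := by
    simp only [hFa, Sset, mem_union, mem_filter, mem_univ, true_and]
    rintro (⟨_, h2⟩ | ⟨h1, _⟩)
    · exact absurd h2 (not_lt.mpr hxy.le)
    · exact absurd h1 (lt_irrefl p)
  have hsub : insert p (Fa ∪ Sset a p q) ⊆
      univ.filter fun i : Fin n => i < q ∧ b.symm q < b.symm i := by
    intro i hi
    simp only [mem_insert, mem_union, hFa, Sset, mem_filter, mem_univ, true_and] at hi
    simp only [mem_filter, mem_univ, true_and]
    rcases hi with rfl | ⟨h1, h2⟩ | ⟨h1, h2, _⟩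
    · exact ⟨hpq, by rw [posb_q hb, posb_p hb]; exact hxy⟩
    · have hip : i ≠ p := by
        rintro rfl
        exact absurd h2 (not_lt.mpr hxy.le)
      refine ⟨h1, ?_⟩
      rw [posb_q hb, posb_other hb hip h1.ne]
      exact hxy.trans h2
    · refine ⟨h1.trans hpq, ?_⟩
      rw [posb_q hb, posb_other hb h1.ne (h1.trans hpq).ne]
      exact h2
  have hle := Finset.card_le_card hsub
  rw [Finset.card_insert_of_notMem hpnot, card_union_of_disjoint hdis] at hle
  have e1 : codeOf a q = Fa.card := rfl
  have e2 : codeOf b q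
      = (univ.filter fun i : Fin n => i < q ∧ b.symm q < b.symm i).card := rfl
  omega

lemma code_exists_k :
    ∃ k : Fin n, p ≤ k ∧ k ≤ q ∧
      codeOf b p + (Sset a p q).card + (k.val - p.val) ≤ codeOf b k := by
  classical
  set L := univ.filter (fun i : Fin n => p < i ∧ i < q ∧ b.symm i < a.symm p) with hL
  obtain ⟨k, hk1, hk2, hk3, hk4⟩ :
      ∃ k : Fin n, p < k ∧ k ≤ q ∧ b.symm k ≤ a.symm p ∧
        ∀ i, p < i → i < k → a.symm p < b.symm i := by
    by_cases hLne : L.Nonempty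
    · refine ⟨L.min' hLne, ?_, ?_, ?_, ?_⟩
      · have := L.min'_mem hLne
        simp only [hL, mem_filter, mem_univ, true_and] at this
        exact this.1
      · have := L.min'_mem hLne
        simp only [hL, mem_filter, mem_univ, true_and] at this
        exact this.2.1.le
      · have := L.min'_mem hLne
        simp only [hL, mem_filter, mem_univ, true_and] at this
        exact this.2.2.le
      · intro i hi1 hi2
        have hiq : i < q := hi2.trans_le (by
          have := L.min'_mem hLne
          simp only [hL, mem_filter, mem_univ, true_and] at this
          exact this.2.1.le)
        have hnotL : i ∉ L := fun hmem => absurd (L.min'_le i hmem) (not_le.mpr hi2)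
        simp only [hL, mem_filter, mem_univ, true_and] at hnotL
        push_neg at hnotL
        have hle2 := hnotL hi1 hiq
        rcases hle2.lt_or_eq with h | h
        · exact h
        · exfalso
          exact hiq.ne (b.symm.injective (h.symm.trans (posb_q hb).symm))
    · refine ⟨q, hpq, le_refl q, le_of_eq (posb_q hb), ?_⟩
      intro i hi1 hi2
      have : i ∉ L := fun hmem => hLne ⟨i, hmem⟩
      simp only [hL, mem_filter, mem_univ, true_and] at this
      push_neg at this
      have h := this hi1 hi2
      rcases h.lt_or_eq with h' | h'
      · exact h'
      · exfalso
        exact hi2.ne (b.symm.injective (h'.symm.trans (posb_q hb).symm))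
  refine ⟨k, hk1.le, hk2, ?_⟩
  classical
  set A := univ.filter (fun i : Fin n => i < p ∧ b.symm p < b.symm i) with hA
  set C := Finset.Ico p k with hC
  have hdisAB : Disjoint A (Sset a p q) := by
    rw [Finset.disjoint_left]
    intro i hi hi'
    simp only [hA, Sset, mem_filter, mem_univ, true_and] at hi hi'
    rw [posb_p hb, posb_other hb hi.1.ne (hi.1.trans hpq).ne] at hi
    exact absurd hi.2 (not_lt.mpr hi'.2.2.le)
  have hdisC : Disjoint (A ∪ Sset a p q) C := by
    rw [Finset.disjoint_left]
    intro i hi hi'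
    rw [hC, Finset.mem_Ico] at hi'
    simp only [hA, Sset, mem_union, mem_filter, mem_univ, true_and] at hi
    rcases hi with ⟨h1, _⟩ | ⟨h1, _⟩ <;> exact absurd hi'.1 (not_le.mpr h1)
  have hsub : (A ∪ Sset a p q) ∪ C ⊆
      univ.filter fun i : Fin n => i < k ∧ b.symm k < b.symm i := by
    intro i hi
    simp only [mem_union, hA, Sset, mem_filter, mem_univ, true_and, hC,
      Finset.mem_Ico] at hi
    simp only [mem_filter, mem_univ, true_and]
    rcases hi with (⟨h1, h2⟩ | ⟨h1, h2, h3⟩) | ⟨h1, h2⟩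
    · refine ⟨h1.trans hk1, ?_⟩
      have hkp : b.symm k < b.symm p := hk3.trans_lt (by rw [posb_p hb]; exact hxy)
      exact hkp.trans h2
    · refine ⟨h1.trans hk1, ?_⟩
      rw [posb_other hb h1.ne (h1.trans hpq).ne]
      exact hk3.trans_lt h2
    · refine ⟨h2, ?_⟩
      rcases h1.lt_or_eq with h | rfl
      · exact hk3.trans_lt (hk4 i h h2)
      · exact hk3.trans_lt (by rw [posb_p hb]; exact hxy)
  have hle := Finset.card_le_card hsub
  rw [card_union_of_disjoint hdisC, card_union_of_disjoint hdisAB] at hle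
  have e1 : codeOf b p = A.card := rfl
  have e2 : codeOf b k
      = (univ.filter fun i : Fin n => i < k ∧ b.symm k < b.symm i).card := rfl
  have e3 : C.card = k.val - p.val := by rw [hC, Fin.card_Ico]
  omega

lemma inv_lt_of_swap : invNum a < invNum b := by
  rw [← sum_codeOf, ← sum_codeOf]
  have hq' : q ∈ Finset.univ.erase p := Finset.mem_erase.mpr ⟨hpq.ne', mem_univ q⟩
  rw [← Finset.add_sum_erase _ (codeOf a) (mem_univ p),
    ← Finset.add_sum_erase _ (codeOf a) hq',
    ← Finset.add_sum_erase _ (codeOf b) (mem_univ p),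
    ← Finset.add_sum_erase _ (codeOf b) hq']
  have h1 := code_p hpq hxy hb
  have h2 := code_q_ge hpq hxy hb
  have h3 : ∀ k ∈ (Finset.univ.erase p).erase q, codeOf a k ≤ codeOf b k := by
    intro k hk
    rw [mem_erase, mem_erase] at hk
    rcases lt_trichotomy k p with h | h | h
    · exact (code_lt_p hpq hb h).ge
    · exact absurd h hk.2.1
    rcases lt_trichotomy k q with h' | h' | h'
    · exact code_mid_le hpq hxy hb h h'
    · exact absurd h' hk.1
    · exact (code_gt_q hpq hb h').ge
  have h4 := Finset.sum_le_sum h3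
  omega

variable (hmax : ∀ i, i < q → a.symm i < a.symm q → a.symm i ≤ a.symm p)

include hmax

lemma sset_empty_of_max : Sset a p q = ∅ := by
  rw [Finset.eq_empty_iff_forall_notMem]
  intro i hi
  simp only [Sset, mem_filter, mem_univ, true_and] at hi
  exact absurd (hmax i (hi.1.trans hpq) hi.2.2) (not_le.mpr hi.2.1)

lemma code_p_of_max : codeOf b p = codeOf a p := by
  have := code_p hpq hxy hb
  rw [sset_empty_of_max hpq hxy hb hmax] at this
  simp at this
  omega

lemma code_mid_of_max {j : Fin n} (h1 : p < j) (h2 : j < q) : codeOf b j = codeOf a j := by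
  unfold codeOf
  congr 1
  ext i
  simp only [mem_filter, mem_univ, true_and]
  have hbj : b.symm j = a.symm j := posb_other hb h1.ne' h2.ne
  constructor <;> rintro ⟨hij, hcond⟩ <;> refine ⟨hij, ?_⟩
  · rcases eq_or_ne i p with rfl | hip
    · rw [hbj, posb_p hb] at hcond
      have hle := hmax j h2 hcond
      exact hle.lt_of_ne (fun h => h1.ne' (a.symm.injective h))
    · rwa [hbj, posb_other hb hip (hij.trans h2).ne] at hcond
  · rcases eq_or_ne i p with rfl | hip
    · rw [hbj, posb_p hb]
      exact hcond.trans hxy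
    · rwa [hbj, posb_other hb hip (hij.trans h2).ne]

lemma code_q_of_max : codeOf b q = codeOf a q + 1 := by
  classical
  have hun : (univ.filter fun i : Fin n => i < q ∧ b.symm q < b.symm i)
      = insert p (univ.filter fun i : Fin n => i < q ∧ a.symm q < a.symm i) := by
    ext i
    simp only [mem_filter, mem_univ, true_and, mem_insert]
    rcases eq_or_ne i p with rfl | hip
    · simp only [eq_self_iff_true, true_or, iff_true]
      exact ⟨hpq, by rw [posb_q hb, posb_p hb]; exact hxy⟩
    constructor
    · rintro ⟨h1, h2⟩
      rw [posb_q hb, posb_other hb hip h1.ne] at h2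
      refine Or.inr ⟨h1, ?_⟩
      rcases lt_trichotomy (a.symm i) (a.symm q) with h | h | h
      · exact absurd (hmax i h1 h) (not_le.mpr h2)
      · exact absurd (a.symm.injective h) h1.ne
      · exact h
    · rintro (h | ⟨h1, h2⟩)
      · exact absurd h hip
      · refine ⟨h1, ?_⟩
        rw [posb_q hb, posb_other hb hip h1.ne]
        exact hxy.trans h2
  have hpnot : p ∉ (univ.filter fun i : Fin n => i < q ∧ a.symm q < a.symm i) := by
    simp only [mem_filter, mem_univ, true_and]
    rintro ⟨_, h2⟩
    exact absurd h2 (not_lt.mpr hxy.le)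
  unfold codeOf
  rw [hun, Finset.card_insert_of_notMem hpnot]

end Swap

section Inj

variable {n : ℕ}

open Finset

lemma code_dir (v w : Equiv.Perm (Fin n)) (j : Fin n)
    (hcard : codeOf v j = codeOf w j)
    (hIH : ∀ i i' : Fin n, i < j → i' < j → i ≠ i' →
      (w.symm i < w.symm i' → v.symm i < v.symm i'))
    (i₀ : Fin n) (h0 : i₀ < j) (hv : v.symm j < v.symm i₀) : w.symm j < w.symm i₀ := by
  classical
  by_contra hcon
  push_neg at hcon
  have hlt : w.symm i₀ < w.symm j :=
    hcon.lt_of_ne (fun h => h0.ne (w.symm.injective h))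
  set U := univ.filter (fun i' : Fin n => i' < j ∧ v.symm i₀ ≤ v.symm i') with hU
  have hUsub : U ⊆ univ.filter (fun i' : Fin n => i' < j ∧ v.symm j < v.symm i') := by
    intro i' hi'
    simp only [hU, mem_filter, mem_univ, true_and] at hi' ⊢
    exact ⟨hi'.1, hv.trans_le hi'.2⟩
  have hTw : insert i₀ (univ.filter (fun i' : Fin n => i' < j ∧ w.symm j < w.symm i')) ⊆ U := by
    intro i' hi'
    rcases Finset.mem_insert.mp hi' with rfl | hi'
    · simp only [hU, mem_filter, mem_univ, true_and]
      exact ⟨h0, le_refl _⟩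
    · simp only [mem_filter, mem_univ, true_and] at hi'
      simp only [hU, mem_filter, mem_univ, true_and]
      have hne : i₀ ≠ i' := by
        rintro rfl
        exact absurd hi'.2 (not_lt.mpr hcon)
      exact ⟨hi'.1, (hIH i₀ i' h0 hi'.1 hne (hlt.trans hi'.2)).le⟩
  have hnotmem : i₀ ∉ univ.filter (fun i' : Fin n => i' < j ∧ w.symm j < w.symm i') := by
    simp only [mem_filter, mem_univ, true_and]
    rintro ⟨_, h⟩
    exact absurd h (not_lt.mpr hcon)
  have h1 := Finset.card_le_card hTw
  have h2 := Finset.card_le_card hUsub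
  rw [Finset.card_insert_of_notMem hnotmem] at h1
  have e1 : codeOf v j
      = (univ.filter (fun i' : Fin n => i' < j ∧ v.symm j < v.symm i')).card := rfl
  have e2 : codeOf w j
      = (univ.filter (fun i' : Fin n => i' < j ∧ w.symm j < w.symm i')).card := rfl
  omega

lemma codeOf_inj {v w : Equiv.Perm (Fin n)} (h : ∀ k, codeOf v k = codeOf w k) : v = w := by
  classical
  have main : ∀ N : ℕ, ∀ i j : Fin n, i < j → j.val < N →
      (v.symm j < v.symm i ↔ w.symm j < w.symm i) := by
    intro N
    induction N with
    | zero => intro i j _ hj; omega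
    | succ N IH =>
      intro i j hij hjN
      rcases Nat.lt_or_ge j.val N with hN | hN
      · exact IH i j hij hN
      have hjval : j.val = N := by omega
      have hIHpair : ∀ i i' : Fin n, i < j → i' < j → i ≠ i' →
          ((w.symm i < w.symm i' → v.symm i < v.symm i') ∧
           (v.symm i < v.symm i' → w.symm i < w.symm i')) := by
        intro a b ha hb hne
        have haN : a.val < N := by
          have h' : a.val < j.val := ha
          omega
        have hbN : b.val < N := by
          have h' : b.val < j.val := hb
          omega
        rcases lt_trichotomy a b with hab | rfl | hab
        · have hiff := IH a b hab hbN
          constructor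
          · intro hww
            have h1 : ¬ v.symm b < v.symm a := fun hc => absurd (hiff.mp hc) (asymm hww)
            have h2 : v.symm a ≠ v.symm b := fun hc => hne (v.symm.injective hc)
            exact (not_lt.mp h1).lt_of_ne h2
          · intro hvv
            have h1 : ¬ w.symm b < w.symm a := fun hc => absurd (hiff.mpr hc) (asymm hvv)
            have h2 : w.symm a ≠ w.symm b := fun hc => hne (w.symm.injective hc)
            exact (not_lt.mp h1).lt_of_ne h2
        · exact absurd rfl hne
        · have hiff := IH b a hab haN
          exact ⟨fun hww => hiff.mpr hww, fun hvv => hiff.mp hvv⟩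
      constructor
      · intro hv
        exact code_dir v w j (h j) (fun a b ha hb hne => (hIHpair a b ha hb hne).1) i hij hv
      · intro hw
        exact code_dir w v j (h j).symm
          (fun a b ha hb hne => (hIHpair a b ha hb hne).2) i hij hw
  have hpairs : ∀ i j : Fin n, i ≠ j → (v.symm i < v.symm j ↔ w.symm i < w.symm j) := by
    intro i j hne
    have gen : ∀ i j : Fin n, i < j → (v.symm j < v.symm i ↔ w.symm j < w.symm i) :=
      fun i j hij => main n i j hij j.isLt
    rcases lt_trichotomy i j with hij | rfl | hij
    · have hiff := gen i j hij
      constructor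
      · intro h1
        have h2 : ¬ w.symm j < w.symm i := fun hc => absurd (hiff.mpr hc) (asymm h1)
        have h3 : w.symm i ≠ w.symm j := fun hc => hne (w.symm.injective hc)
        exact (not_lt.mp h2).lt_of_ne h3
      · intro h1
        have h2 : ¬ v.symm j < v.symm i := fun hc => absurd (hiff.mp hc) (asymm h1)
        have h3 : v.symm i ≠ v.symm j := fun hc => hne (v.symm.injective hc)
        exact (not_lt.mp h2).lt_of_ne h3
    · exact absurd rfl hne
    · exact gen j i hij
  have hrank : ∀ (u : Equiv.Perm (Fin n)) (i : Fin n),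
      (univ.filter fun t : Fin n => u.symm t < u.symm i).card = (u.symm i).val := by
    intro u i
    rw [← card_filter_fin_lt (u.symm i)]
    apply Finset.card_nbij' (i := fun t => u.symm t) (j := fun t => u t)
    · intro t ht
      simp only [mem_filter, mem_univ, true_and, mem_coe] at ht ⊢
      exact ht
    · intro t ht
      simp only [mem_filter, mem_univ, true_and, mem_coe] at ht ⊢
      simpa using ht
    · intro t _; simp
    · intro t _; simp
  have hval : ∀ i, (v.symm i).val = (w.symm i).val := by
    intro i
    have hv := hrank v i
    have hw := hrank w i
    have hset : (univ.filter fun t : Fin n => v.symm t < v.symm i)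
        = (univ.filter fun t : Fin n => w.symm t < w.symm i) := by
      ext t
      simp only [mem_filter, mem_univ, true_and]
      rcases eq_or_ne t i with rfl | hne
      · exact iff_of_false (lt_irrefl _) (lt_irrefl _)
      · exact hpairs t i hne
    rw [hset] at hv
    omega
  have hsymm : v.symm = w.symm := Equiv.ext fun i => Fin.ext (hval i)
  have := congrArg Equiv.symm hsymm
  simpa using this

end Inj

lemma codeOf_surj {n : ℕ} (c : Fin n → ℕ) (hc : ∀ k, c k ≤ k.val) :
    ∃ v : Equiv.Perm (Fin n), ∀ k, codeOf v k = c k := by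
  classical
  set φ : Equiv.Perm (Fin n) → (∀ k : Fin n, Fin (k.val + 1)) :=
    fun v k => ⟨codeOf v k, Nat.lt_succ_of_le (codeOf_le v k)⟩ with hφ
  have hinj : Function.Injective φ := by
    intro v w hvw
    apply codeOf_inj
    intro k
    have := congrFun hvw k
    simpa [hφ, Fin.ext_iff] using this
  have hcard : Fintype.card (Equiv.Perm (Fin n))
      = Fintype.card (∀ k : Fin n, Fin (k.val + 1)) := by
    rw [Fintype.card_perm, Fintype.card_pi]
    simp only [Fintype.card_fin, Fintype.card_fin]
    rw [Fin.prod_univ_eq_prod_range (fun i => i + 1) n,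
      Finset.prod_range_add_one_eq_factorial]
  have hbij : Function.Bijective φ :=
    (Fintype.bijective_iff_injective_and_card φ).mpr ⟨hinj, hcard⟩
  obtain ⟨v, hv⟩ := hbij.2 (fun k => ⟨c k, Nat.lt_succ_of_le (hc k)⟩)
  refine ⟨v, fun k => ?_⟩
  have := congrFun hv k
  simpa [hφ, Fin.ext_iff] using this

section Chains

open Finset

variable {n : ℕ}

lemma code_adjacent {w : Equiv.Perm (Fin n)} (hw : Avoids312 w) :
    ∀ k l : Fin n, l.val = k.val + 1 → codeOf w l ≤ codeOf w k + 1 := by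
  classical
  intro k l hkl
  by_contra hcon
  push_neg at hcon
  have hkl' : k < l := by
    have : k.val < l.val := by omega
    exact this
  have hne : k ≠ l := hkl'.ne
  set Tl := univ.filter (fun i : Fin n => i < l ∧ w.symm l < w.symm i) with hTl
  set Tk := univ.filter (fun i : Fin n => i < k ∧ w.symm k < w.symm i) with hTk
  have el : codeOf w l = Tl.card := rfl
  have ek : codeOf w k = Tk.card := rfl
  rcases lt_trichotomy (w.symm k) (w.symm l) with hlt | heq | hgt
  · have hsub : Tl ⊆ insert k Tk := by
      intro i hi
      simp only [hTl, mem_filter, mem_univ, true_and] at hi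
      rcases eq_or_ne i k with rfl | hik
      · exact Finset.mem_insert_self _ _
      · apply Finset.mem_insert_of_mem
        simp only [hTk, mem_filter, mem_univ, true_and]
        have : i.val < l.val := hi.1
        have hik' : i < k := by
          have : i.val ≠ k.val := fun h => hik (Fin.ext h)
          exact show i.val < k.val by omega
        exact ⟨hik', hlt.trans hi.2⟩
    have := (Finset.card_le_card hsub).trans (Finset.card_insert_le _ _)
    omega
  · exact absurd (w.symm.injective heq) hne
  · have hkTl : k ∈ Tl := by
      simp only [hTl, mem_filter, mem_univ, true_and]
      exact ⟨hkl', hgt⟩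
    have hnotsub : ¬ (Tl.erase k ⊆ Tk) := by
      intro hsub
      have h1 := Finset.card_le_card hsub
      rw [Finset.card_erase_of_mem hkTl] at h1
      omega
    obtain ⟨i, hi, hiTk⟩ := Finset.not_subset.mp hnotsub
    rw [Finset.mem_erase] at hi
    obtain ⟨hik, hiTl⟩ := hi
    simp only [hTl, mem_filter, mem_univ, true_and] at hiTl
    have hikk : i < k := by
      have h1 : i.val < l.val := hiTl.1
      have h2 : i.val ≠ k.val := fun h => hik (Fin.ext h)
      exact show i.val < k.val by omega
    have hwi : w.symm i < w.symm k := by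
      simp only [hTk, mem_filter, mem_univ, true_and] at hiTk
      push_neg at hiTk
      have := hiTk hikk
      exact this.lt_of_ne fun h => hik (w.symm.injective h)
    exact hw ⟨w.symm l, w.symm i, w.symm k, hiTl.2, hwi, by
      simp only [Equiv.apply_symm_apply]
      exact ⟨hikk, hkl'⟩⟩

lemma code_stair {w : Equiv.Perm (Fin n)} (hw : Avoids312 w) :
    ∀ k l : Fin n, k ≤ l → codeOf w l ≤ codeOf w k + (l.val - k.val) := by
  have hadj := code_adjacent hw
  suffices H : ∀ d : ℕ, ∀ k l : Fin n, l.val = k.val + d →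
      codeOf w l ≤ codeOf w k + d by
    intro k l hkl
    have h1 : k.val ≤ l.val := hkl
    have := H (l.val - k.val) k l (by omega)
    omega
  intro d
  induction d with
  | zero =>
    intro k l hkl
    have : l = k := Fin.ext (by omega)
    subst this
    omega
  | succ d IH =>
    intro k l hkl
    have hlt : k.val + d < n := by
      have := l.isLt
      omega
    set l' : Fin n := ⟨k.val + d, hlt⟩ with hl'
    have h1 := IH k l' rfl
    have h2 := hadj l' l (by simp only [hl', hkl]; omega)
    omega

/-- Hard direction step: going down one Bruhat step stays below the code of a
312-avoiding permutation. -/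
lemma claim1 {w a c : Equiv.Perm (Fin n)} (hw : Avoids312 w)
    (p q : Fin n) (hpq : p < q) (hxy : a.symm p < a.symm q)
    (hc : c = a * Equiv.swap (a.symm p) (a.symm q))
    (hcw : ∀ k, codeOf c k ≤ codeOf w k) :
    ∀ k, codeOf a k ≤ codeOf w k := by
  intro k
  rcases lt_trichotomy k p with hk | rfl | hk
  · rw [← code_lt_p hpq hc hk]; exact hcw k
  · obtain ⟨k', h1, _, h3⟩ := code_exists_k hpq hxy hc
    have h4 := code_p hpq hxy hc
    have h5 := code_stair hw k k' h1
    have h6 := hcw k'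
    omega
  rcases lt_trichotomy k q with hk' | rfl | hk'
  · exact (code_mid_le hpq hxy hc hk hk').trans (hcw k)
  · have := code_q_ge hpq hxy hc
    have := hcw k
    omega
  · rw [← code_gt_q hpq hc hk']; exact hcw k

lemma inv_lt_rev (a c : Equiv.Perm (Fin n)) (p q : Fin n) (hpq : p < q)
    (hyx : a.symm q < a.symm p) (hc : c = a * Equiv.swap (a.symm p) (a.symm q)) :
    invNum c < invNum a := by
  have h1 : c.symm p = a.symm q := by
    rw [hc, mul_swap_symm_apply, Equiv.swap_apply_left]
  have h2 : c.symm q = a.symm p := by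
    rw [hc, mul_swap_symm_apply, Equiv.swap_apply_right]
  apply inv_lt_of_swap hpq (show c.symm p < c.symm q by rw [h1, h2]; exact hyx)
  rw [h1, h2, hc, mul_assoc, Equiv.swap_comm, Equiv.swap_mul_self, mul_one]

lemma swap_normalize (a c : Equiv.Perm (Fin n)) (x y : Fin n) (hne : x ≠ y)
    (hc : c = a * Equiv.swap x y) (hinv : invNum a < invNum c) :
    ∃ p q : Fin n, p < q ∧ a.symm p < a.symm q ∧
      c = a * Equiv.swap (a.symm p) (a.symm q) := by
  have hsx : a.symm (a x) = x := Equiv.symm_apply_apply a x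
  have hsy : a.symm (a y) = y := Equiv.symm_apply_apply a y
  have hvne : a x ≠ a y := fun h => hne (a.injective h)
  rcases lt_or_gt_of_ne hvne with hut | hut
  · rcases lt_or_gt_of_ne hne with hxy | hyx
    · exact ⟨a x, a y, hut, by rw [hsx, hsy]; exact hxy, by rw [hsx, hsy]; exact hc⟩
    · exfalso
      have := inv_lt_rev a c (a x) (a y) hut (by rw [hsx, hsy]; exact hyx)
        (by rw [hsx, hsy]; exact hc)
      omega
  · rcases lt_or_gt_of_ne hne.symm with hyx | hxy
    · exact ⟨a y, a x, hut, by rw [hsx, hsy]; exact hyx,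
        by rw [hsx, hsy, Equiv.swap_comm]; exact hc⟩
    · exfalso
      have := inv_lt_rev a c (a y) (a x) hut (by rw [hsx, hsy]; exact hxy)
        (by rw [hsx, hsy, Equiv.swap_comm]; exact hc)
      omega

end Chains

section Main

open Finset

variable {n : ℕ}

lemma bruhat_of_code_le (w : Equiv.Perm (Fin n)) :
    ∀ v : Equiv.Perm (Fin n), (∀ k, codeOf v k ≤ codeOf w k) → PermBruhatLE v w := by
  classical
  suffices H : ∀ N : ℕ, ∀ v : Equiv.Perm (Fin n), (∀ k, codeOf v k ≤ codeOf w k) →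
      (∑ k, codeOf w k ≤ N + ∑ k, codeOf v k) → PermBruhatLE v w by
    intro v hv
    exact H (∑ k, codeOf w k) v hv (by omega)
  intro N
  induction N with
  | zero =>
    intro v hv hsum
    have heq : ∀ k, codeOf v k = codeOf w k := by
      by_contra hcon
      push_neg at hcon
      obtain ⟨k₀, hk₀⟩ := hcon
      have hstrict : codeOf v k₀ < codeOf w k₀ := (hv k₀).lt_of_ne hk₀
      have := Finset.sum_lt_sum (f := codeOf v) (g := codeOf w)
        (fun k _ => hv k) ⟨k₀, mem_univ k₀, hstrict⟩
      omega
    have : v = w := codeOf_inj heq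
    subst this
    exact Relation.ReflTransGen.refl
  | succ N IH =>
    intro v hv hsum
    by_cases hall : ∀ k, codeOf v k = codeOf w k
    · have : v = w := codeOf_inj hall
      subst this
      exact Relation.ReflTransGen.refl
    push_neg at hall
    obtain ⟨k₀, hk₀⟩ := hall
    have hstrict : codeOf v k₀ < codeOf w k₀ := (hv k₀).lt_of_ne hk₀
    -- find m : the value below k₀ placed before k₀, with maximal position
    set F := univ.filter (fun i : Fin n => i < k₀ ∧ v.symm i < v.symm k₀) with hF
    have hsplit : (univ.filter fun i : Fin n => i < k₀)
        = (univ.filter fun i : Fin n => i < k₀ ∧ v.symm k₀ < v.symm i) ∪ F := by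
      ext i
      simp only [hF, mem_filter, mem_univ, true_and, mem_union]
      constructor
      · intro hi
        rcases lt_trichotomy (v.symm k₀) (v.symm i) with h | h | h
        · exact Or.inl ⟨hi, h⟩
        · exact absurd (v.symm.injective h) hi.ne'
        · exact Or.inr ⟨hi, h⟩
      · rintro (⟨hi, _⟩ | ⟨hi, _⟩) <;> exact hi
    have hdis : Disjoint (univ.filter fun i : Fin n => i < k₀ ∧ v.symm k₀ < v.symm i) F := by
      rw [Finset.disjoint_left]
      intro i hi hi'
      simp only [hF, mem_filter, mem_univ, true_and] at hi hi'
      exact absurd hi.2 (not_lt.mpr hi'.2.le)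
    have hcards : k₀.val = codeOf v k₀ + F.card := by
      have h1 := card_filter_fin_lt k₀
      rw [hsplit, card_union_of_disjoint hdis] at h1
      have e : codeOf v k₀
          = (univ.filter fun i : Fin n => i < k₀ ∧ v.symm k₀ < v.symm i).card := rfl
      omega
    have hFne : F.Nonempty := by
      rw [← Finset.card_pos]
      have := codeOf_le w k₀
      omega
    obtain ⟨m, hmF, hmax'⟩ := F.exists_max_image (fun i => v.symm i) hFne
    simp only [hF, mem_filter, mem_univ, true_and] at hmF
    have hmax : ∀ i, i < k₀ → v.symm i < v.symm k₀ → v.symm i ≤ v.symm m := by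
      intro i h1 h2
      exact hmax' i (by simp only [hF, mem_filter, mem_univ, true_and]; exact ⟨h1, h2⟩)
    set b := v * Equiv.swap (v.symm m) (v.symm k₀) with hbdef
    have hq := code_q_of_max hmF.1 hmF.2 hbdef hmax
    have hother : ∀ j, j ≠ k₀ → codeOf b j = codeOf v j := by
      intro j hj
      rcases lt_trichotomy j m with h | rfl | h
      · exact code_lt_p hmF.1 hbdef h
      · exact code_p_of_max hmF.1 hmF.2 hbdef hmax
      rcases lt_trichotomy j k₀ with h' | h' | h'
      · exact code_mid_of_max hmF.1 hmF.2 hbdef hmax h h'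
      · exact absurd h' hj
      · exact code_gt_q hmF.1 hbdef h'
    have hble : ∀ k, codeOf b k ≤ codeOf w k := by
      intro k
      rcases eq_or_ne k k₀ with rfl | hk
      · omega
      · rw [hother k hk]; exact hv k
    have hsumb : ∑ k, codeOf b k = 1 + ∑ k, codeOf v k := by
      rw [← Finset.add_sum_erase _ (codeOf b) (mem_univ k₀),
        ← Finset.add_sum_erase _ (codeOf v) (mem_univ k₀)]
      have : ∑ k ∈ univ.erase k₀, codeOf b k = ∑ k ∈ univ.erase k₀, codeOf v k :=
        Finset.sum_congr rfl fun k hk => hother k (Finset.mem_erase.mp hk).1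
      omega
    have hstep : invNum v < invNum b := inv_lt_of_swap hmF.1 hmF.2 hbdef
    have hneq : v.symm m ≠ v.symm k₀ := fun h => hmF.1.ne (v.symm.injective h)
    exact Relation.ReflTransGen.head ⟨v.symm m, v.symm k₀, hneq, hbdef, hstep⟩
      (IH b hble (by omega))

lemma code_le_of_bruhat {w : Equiv.Perm (Fin n)} (hw : Avoids312 w) :
    ∀ v : Equiv.Perm (Fin n), PermBruhatLE v w → ∀ k, codeOf v k ≤ codeOf w k := by
  intro v hvw
  unfold PermBruhatLE at hvw
  induction hvw using Relation.ReflTransGen.head_induction_on with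
  | refl => exact fun k => le_refl _
  | head hstep _ IH =>
    obtain ⟨x, y, hne, hc, hinv⟩ := hstep
    obtain ⟨p, q, hpq, hxy, hc'⟩ := swap_normalize _ _ x y hne hc hinv
    exact claim1 hw p q hpq hxy hc' IH

end Main


open scoped Classical in
/-- Let `w ∈ S_n` avoid the pattern `312`.  Then the Poincaré
polynomial of the lower Bruhat interval of `w` factorizes as
`Σ_{v ≤ w} q^(inv v) = ∏_{k=1}^n [c(w) k + 1]_q`. -/
theorem statement15 (n : ℕ) (hn : 1 ≤ n) (w : Equiv.Perm (Fin n)) (hw : Avoids312 w) :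
    ∑ v ∈ Finset.univ.filter fun v => PermBruhatLE v w, (X : Polynomial ℤ) ^ invNum v
      = ∏ k : Fin n, ∑ j ∈ Finset.range (codeOf w k + 1), (X : Polynomial ℤ) ^ j := by
  classical
  have hset : (Finset.univ.filter fun v => PermBruhatLE v w)
      = Finset.univ.filter fun v : Equiv.Perm (Fin n) => ∀ k, codeOf v k ≤ codeOf w k := by
    ext v
    simp only [Finset.mem_filter, Finset.mem_univ, true_and]
    exact ⟨fun h => code_le_of_bruhat hw v h, fun h => bruhat_of_code_le w v h⟩
  rw [hset,
    Finset.prod_univ_sum (fun k : Fin n => Finset.range (codeOf w k + 1))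
      (fun k j => (X : Polynomial ℤ) ^ j)]
  apply Finset.sum_bij (i := fun v _ => fun k => codeOf v k)
  · intro v hv
    simp only [Finset.mem_filter, Finset.mem_univ, true_and] at hv
    rw [Fintype.mem_piFinset]
    intro k
    rw [Finset.mem_range]
    exact Nat.lt_succ_of_le (hv k)
  · intro v1 h1 v2 h2 heq
    exact codeOf_inj (fun k => congrFun heq k)
  · intro f hf
    rw [Fintype.mem_piFinset] at hf
    have hfk : ∀ k, f k ≤ codeOf w k :=
      fun k => Nat.lt_succ_iff.mp (Finset.mem_range.mp (hf k))
    obtain ⟨v, hv⟩ := codeOf_surj f (fun k => (hfk k).trans (codeOf_le w k))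
    refine ⟨v, ?_, ?_⟩
    · simp only [Finset.mem_filter, Finset.mem_univ, true_and]
      intro k
      rw [hv k]
      exact hfk k
    · funext k
      exact hv k
  · intro v hv
    rw [Finset.prod_pow_eq_pow_sum, sum_codeOf]
end

section
/- Let u ∈ S_n be a unimodal permutation different from the identity, let j := u^{-1}(n), and let Λ(u) := (n − u(j+1), n − u(j+2), …, n − u(n)), a partition of inv(u) into distinct parts λ_1 < λ_2 < … < λ_r. Let Λ(u)* = (μ_1 ≤ μ_2 ≤ … ≤ μ_s) be the conjugate (dual) partition of Λ(u) written in weakly increasing order, where s = λ_r = n − u(n). Then the code of u satisfies c(u) = (0, 0, …, 0, μ_1, μ_2, …, μ_s), with u(n) initial zeros, where c(u)_k := #{i : i < k, u^{-1}(i) > u^{-1}(k)}. -/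
/-- `u` is a unimodal permutation. -/
def IsUnimodalPerm {n : ℕ} (u : Equiv.Perm (Fin n)) : Prop :=
  ∃ i : ℕ, i ≤ n ∧ ∀ j : ℕ, ∀ hj : j + 1 < n,
    (j + 1 < i → u ⟨j, by omega⟩ < u ⟨j + 1, hj⟩) ∧
    (i < j + 1 → u ⟨j + 1, hj⟩ < u ⟨j, by omega⟩)

/-- The permutation `u` of `Fin n`, rewritten as a function on `{1, …, n}`:
`toOne u m = u(m)` in one-indexed notation. -/
def toOne {n : ℕ} (u : Equiv.Perm (Fin n)) (m : ℕ) : ℕ :=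
  if h : m - 1 < n then (u ⟨m - 1, h⟩ : ℕ) + 1 else 0

/-- The (one-indexed) code `c(u) k = #{i : i < k, u⁻¹(i) > u⁻¹(k)}`, for `k ∈ {1,…,n}`. -/
def codeOne {n : ℕ} (u : Equiv.Perm (Fin n)) (k : ℕ) : ℕ :=
  ((Finset.Icc 1 n).filter fun i => i < k ∧ toOne u⁻¹ k < toOne u⁻¹ i).card

/- ------------------ auxiliary lemmas ------------------ -/

lemma toOne_eq' {n : ℕ} (u : Equiv.Perm (Fin n)) (p : ℕ) (q : Fin n)
    (h2 : (q : ℕ) = p - 1) : toOne u p = (u q : ℕ) + 1 := by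
  have h : p - 1 < n := h2 ▸ q.isLt
  unfold toOne
  rw [dif_pos h, show (⟨p-1, h⟩ : Fin n) = q from Fin.ext h2.symm]

lemma aux_mono_chain (lam : ℕ → ℕ) (r : ℕ) (hmono : ∀ t < r, lam t ≤ lam (t+1)) :
    ∀ a b, a ≤ b → b ≤ r → lam a ≤ lam b := by
  intro a b hab hbr
  induction b with
  | zero => have : a = 0 := by omega
            simp [this]
  | succ b ih =>
    rcases Nat.lt_or_ge a (b+1) with h | h
    · exact le_trans (ih (by omega) (by omega)) (hmono b (by omega))
    · have : a = b + 1 := by omega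
      simp [this]

lemma aux_telescope (lam : ℕ → ℕ) (r : ℕ) (hmono : ∀ t < r, lam t ≤ lam (t+1)) :
    ∀ C, C ≤ r → ∑ k ∈ Finset.Icc 1 C, (lam (r - k + 1) - lam (r - k)) = lam r - lam (r - C) := by
  intro C
  induction C with
  | zero => simp
  | succ C ih =>
    intro hC
    rw [Finset.sum_Icc_succ_top (by omega), ih (by omega)]
    have h1 : r - (C+1) + 1 = r - C := by omega
    rw [h1]
    have h2 : lam (r-(C+1)) ≤ lam (r-C) := by
      have := hmono (r-(C+1)) (by omega)
      rwa [h1] at this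
    have h3 : lam (r-C) ≤ lam r := aux_mono_chain lam r hmono _ _ (by omega) (by omega)
    omega

lemma aux_count_le (s : ℕ) (f : ℕ → ℕ)
    (hmono : ∀ a b, 1 ≤ a → a ≤ b → b ≤ s → f a ≤ f b)
    (t : ℕ) (ht1 : 1 ≤ t) (hts : t ≤ s) (C : ℕ) :
    f t ≤ C ↔ t ≤ ((Finset.Icc 1 s).filter fun x => f x ≤ C).card := by
  constructor
  · intro h
    have hsub : Finset.Icc 1 t ⊆ (Finset.Icc 1 s).filter fun x => f x ≤ C := by
      intro x hx
      rw [Finset.mem_Icc] at hx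
      rw [Finset.mem_filter, Finset.mem_Icc]
      exact ⟨⟨hx.1, le_trans hx.2 hts⟩, le_trans (hmono x t hx.1 hx.2 hts) h⟩
    have := Finset.card_le_card hsub
    rw [Nat.card_Icc] at this
    omega
  · intro h
    by_contra hc
    push_neg at hc
    have hsub : ((Finset.Icc 1 s).filter fun x => f x ≤ C) ⊆ Finset.Icc 1 (t-1) := by
      intro x hx
      rw [Finset.mem_filter, Finset.mem_Icc] at hx
      rw [Finset.mem_Icc]
      refine ⟨hx.1.1, ?_⟩
      by_contra hxx
      push_neg at hxx
      have : f t ≤ f x := hmono t x ht1 (by omega) hx.1.2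
      omega
    have := Finset.card_le_card hsub
    rw [Nat.card_Icc] at this
    omega

lemma aux_count_gt (s : ℕ) (f : ℕ → ℕ)
    (hmono : ∀ a b, 1 ≤ a → a ≤ b → b ≤ s → f a ≤ f b) (v N : ℕ)
    (hN : ((Finset.Icc 1 s).filter fun x => v < f x).card = N) :
    (1 ≤ N → v < f (s - N + 1)) ∧ (N < s → f (s - N) ≤ v) := by
  have hNs : N ≤ s := by
    rw [← hN]
    have := Finset.card_filter_le (Finset.Icc 1 s) (fun x => v < f x)
    rw [Nat.card_Icc] at this
    omega
  constructor
  · intro h1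
    by_contra hc
    push_neg at hc
    have hsub : ((Finset.Icc 1 s).filter fun x => v < f x) ⊆ Finset.Icc (s-N+2) s := by
      intro x hx
      rw [Finset.mem_filter, Finset.mem_Icc] at hx
      rw [Finset.mem_Icc]
      refine ⟨?_, hx.1.2⟩
      by_contra hxx
      push_neg at hxx
      have : f x ≤ f (s-N+1) := hmono x (s-N+1) hx.1.1 (by omega) (by omega)
      omega
    have := Finset.card_le_card hsub
    rw [hN, Nat.card_Icc] at this
    omega
  · intro h2
    by_contra hc
    push_neg at hc
    have hsub : Finset.Icc (s-N) s ⊆ (Finset.Icc 1 s).filter fun x => v < f x := by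
      intro x hx
      rw [Finset.mem_Icc] at hx
      rw [Finset.mem_filter, Finset.mem_Icc]
      refine ⟨⟨by omega, hx.2⟩, lt_of_lt_of_le hc (hmono (s-N) x (by omega) hx.1 hx.2)⟩
    have := Finset.card_le_card hsub
    rw [hN, Nat.card_Icc] at this
    omega

/-- Let `u ∈ S_n` be unimodal, `u ≠ id`, `j := u⁻¹(n)`,
`Λ(u) := (n - u(j+1), …, n - u(n))` — a partition of `inv u` into `r = n - j` distinct
parts `λ_1 < … < λ_r` with `λ_r = s = n - u(n)` — and let `μ_1 ≤ … ≤ μ_s` be the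
conjugate (dual) partition of `Λ(u)`, determined by
`m_k(Λ(u)*) = λ_{r-k+1} - λ_{r-k}` (with `λ_0 = 0`).  Then the code of `u` is
`c(u) = (0, …, 0, μ_1, …, μ_s)`, with `u(n)` initial zeros. -/
theorem statement19 (n : ℕ) (hn : 1 ≤ n) (u : Equiv.Perm (Fin n))
    (hu : IsUnimodalPerm u) (hne : u ≠ 1)
    (j r s : ℕ) (hj : j = toOne u⁻¹ n) (hr : r + j = n) (hs : s + toOne u n = n)
    (lam : ℕ → ℕ) (hlam0 : lam 0 = 0)
    (hlam : ∀ t, 1 ≤ t → t ≤ r → lam t = n - toOne u (j + t))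
    (mu : ℕ → ℕ)
    (hmu_mono : ∀ a b, 1 ≤ a → a ≤ b → b ≤ s → mu a ≤ mu b)
    (hmu_parts : ∀ t, 1 ≤ t → t ≤ s → 1 ≤ mu t ∧ mu t ≤ r)
    (hmu_dual : ∀ k, 1 ≤ k → k ≤ r →
      ((Finset.Icc 1 s).filter fun t => mu t = k).card = lam (r - k + 1) - lam (r - k)) :
    (∀ t, 1 ≤ t → t < r → lam t < lam (t + 1)) ∧
    (∑ t ∈ Finset.Icc 1 r, lam t = invNum u) ∧
    lam r = s ∧
    (∀ k, 1 ≤ k → k ≤ n →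
      codeOne u k = if k ≤ toOne u n then 0 else mu (k - toOne u n)) := by
  have hn1 : n - 1 < n := by omega
  obtain ⟨Mx, hum⟩ : ∃ Mx, u Mx = ⟨n-1, hn1⟩ := ⟨u⁻¹ _, u.apply_symm_apply _⟩
  set m : ℕ := (Mx : ℕ) with hm
  have hmn : m < n := Mx.isLt
  have hjm : j = m + 1 := by
    rw [hj, toOne_eq' u⁻¹ n ⟨n-1, hn1⟩ rfl, show u⁻¹ ⟨n-1,hn1⟩ = Mx from by
      rw [← hum, show u⁻¹ (u Mx) = Mx from u.symm_apply_apply Mx]]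
  obtain ⟨i, hi_le, hcond⟩ := hu
  have h_inc : ∀ a b : ℕ, ∀ hb : b < n, ∀ ha : a < b, b < i → u ⟨a, by omega⟩ < u ⟨b, hb⟩ := by
    intro a b
    induction b with
    | zero => intro _ h; omega
    | succ b ih =>
      intro hb hab hbi
      rcases Nat.lt_or_ge a b with h | h
      · exact lt_trans (ih (by omega) h (by omega)) ((hcond b hb).1 hbi)
      · have hab' : a = b := by omega
        subst hab'
        exact (hcond a hb).1 hbi
  have h_dec : ∀ a b : ℕ, ∀ hb : b < n, i ≤ a → ∀ ha : a < b, u ⟨b, hb⟩ < u ⟨a, by omega⟩ := by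
    intro a b
    induction b with
    | zero => intro _ _ h; omega
    | succ b ih =>
      intro hb hia hab
      rcases Nat.lt_or_ge a b with h | h
      · exact lt_trans ((hcond b hb).2 (by omega)) (ih (by omega) hia h)
      · have hab' : a = b := by omega
        subst hab'
        exact (hcond a hb).2 (by omega)
  have h_incF : ∀ a b : Fin n, a < b → (b:ℕ) < i → u a < u b := by
    intro a b hab hbi
    have := h_inc a b b.isLt (by rwa [Fin.lt_def] at hab) hbi
    simpa using this
  have h_decF : ∀ a b : Fin n, i ≤ (a:ℕ) → a < b → u b < u a := by
    intro a b hia hab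
    have := h_dec a b b.isLt hia (by rwa [Fin.lt_def] at hab)
    simpa using this
  have hmi1 : m ≤ i := by
    by_contra hc
    push_neg at hc
    have h := h_decF ⟨m-1, by omega⟩ Mx (by simp; omega) (by rw [Fin.lt_def]; simp; omega)
    rw [hum, Fin.lt_def] at h
    have := (u ⟨m-1, by omega⟩).isLt
    simp at h
    omega
  have hmi2 : i ≤ m + 1 := by
    by_contra hc
    push_neg at hc
    have h := h_incF Mx ⟨m+1, by omega⟩ (by rw [Fin.lt_def]; simp; omega) (by simp; omega)
    rw [hum, Fin.lt_def] at h
    have := (u ⟨m+1, by omega⟩).isLt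
    simp at h
    omega
  have mono_u : ∀ a b : Fin n, a < b → (b:ℕ) ≤ m → u a < u b := by
    intro a b hab hbm
    rcases eq_or_lt_of_le hbm with he | hlt
    · have hbM : b = Mx := Fin.ext (he.trans hm)
      rw [hbM, hum]
      have h1 : a ≠ Mx := ne_of_lt (hbM ▸ hab)
      have h2 : u a ≠ u Mx := fun h => h1 (u.injective h)
      rw [hum] at h2
      have h3 := (u a).isLt
      have h4 : ((u a) : ℕ) ≠ n - 1 := fun h => h2 (Fin.ext h)
      rw [Fin.lt_def]
      simp
      omega
    · exact h_incF a b hab (by omega)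
  have anti_u : ∀ a b : Fin n, m ≤ (a:ℕ) → a < b → u b < u a := by
    intro a b ham hab
    rcases eq_or_lt_of_le ham with he | hlt
    · have haM : a = Mx := Fin.ext (hm ▸ he.symm)
      rw [haM, hum]
      have h1 : b ≠ Mx := (ne_of_lt (haM ▸ hab)).symm
      have h2 : u b ≠ u Mx := fun h => h1 (u.injective h)
      rw [hum] at h2
      have h3 := (u b).isLt
      have h4 : ((u b) : ℕ) ≠ n - 1 := fun h => h2 (Fin.ext h)
      rw [Fin.lt_def]
      simp
      omega
    · exact h_decF a b (by omega) hab
  -- value at last position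
  have hun : toOne u n = (u ⟨n-1, hn1⟩ : ℕ) + 1 := toOne_eq' u n ⟨n-1, hn1⟩ rfl
  have hunlt : (u ⟨n-1, hn1⟩ : ℕ) < n := (u _).isLt
  -- Part 1
  have part1 : ∀ t, 1 ≤ t → t < r → lam t < lam (t + 1) := by
    intro t h1 h2
    have hA : m + t < n := by omega
    have hB : m + t + 1 < n := by omega
    rw [hlam t h1 (by omega), hlam (t+1) (by omega) (by omega),
        toOne_eq' u (j+t) ⟨m+t, hA⟩ (by simp; omega),
        toOne_eq' u (j+(t+1)) ⟨m+t+1, hB⟩ (by simp; omega)]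
    have hx := anti_u ⟨m+t, hA⟩ ⟨m+t+1, hB⟩ (by simp) (by rw [Fin.mk_lt_mk]; omega)
    have h3 := (u ⟨m+t, hA⟩).isLt
    have h4 := (u ⟨m+t+1, hB⟩).isLt
    rw [Fin.lt_def] at hx
    omega
  -- Part 3
  have part3 : lam r = s := by
    rcases Nat.eq_zero_or_pos r with h0 | hpos
    · have hmm : m = n - 1 := by omega
      have hMe : Mx = ⟨n-1, hn1⟩ := Fin.ext (show (Mx:ℕ) = n - 1 by omega)
      have hval : (u ⟨n-1,hn1⟩ : ℕ) = n - 1 := by rw [← hMe, hum, ← hMe, ← hm]; omega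
      rw [h0, hlam0]
      omega
    · rw [hlam r hpos le_rfl, show j + r = n by omega]
      omega
  -- Part 2
  have part2 : ∑ t ∈ Finset.Icc 1 r, lam t = invNum u := by
    have h1 : invNum u = ∑ b : Fin n, (Finset.univ.filter fun a => a < b ∧ u b < u a).card := by
      rw [invNum, Finset.card_eq_sum_card_fiberwise
        (f := Prod.snd) (t := Finset.univ) (fun x _ => Finset.mem_univ _)]
      refine Finset.sum_congr rfl fun b _ => ?_
      refine Finset.card_nbij' (fun p => p.1) (fun a => (a, b)) ?_ ?_ ?_ ?_
      · intro p hp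
        simp only [Finset.mem_coe, Finset.mem_filter, Finset.mem_univ, true_and] at hp ⊢
        obtain ⟨⟨hp1, hp2⟩, hp3⟩ := hp
        rw [hp3] at hp1 hp2
        exact ⟨hp1, hp2⟩
      · intro a ha
        simp only [Finset.mem_coe, Finset.mem_filter, Finset.mem_univ, true_and] at ha
        exact Finset.mem_filter.mpr
          ⟨Finset.mem_filter.mpr ⟨Finset.mem_univ _, ha.1, ha.2⟩, rfl⟩
      · intro p hp
        simp only [Finset.mem_coe, Finset.mem_filter, Finset.mem_univ, true_and] at hp
        rw [← hp.2]
      · intro a _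
        rfl
    have hcard : ∀ b : Fin n, m < (b:ℕ) →
        (Finset.univ.filter fun a => a < b ∧ u b < u a).card = n - 1 - (u b : ℕ) := by
      intro b hb
      have he : (Finset.univ.filter fun a => a < b ∧ u b < u a)
          = Finset.univ.filter fun a => u b < u a := by
        apply Finset.filter_congr
        intro a _
        constructor
        · exact fun h => h.2
        · intro h
          refine ⟨?_, h⟩
          by_contra hc
          push_neg at hc
          rcases eq_or_lt_of_le hc with he2 | hlt2
          · rw [he2] at h; exact lt_irrefl _ h
          · exact absurd h (not_lt.mpr (le_of_lt (anti_u b a (le_of_lt hb) hlt2)))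
      rw [he]
      have he2 : (Finset.univ.filter fun a => u b < u a).card
          = (Finset.univ.filter fun v => u b < v).card := by
        refine Finset.card_nbij' (fun a => u a) (fun v => u⁻¹ v) ?_ ?_ ?_ ?_
        · intro a ha; simpa using (Finset.mem_filter.mp ha).2
        · intro v hv
          simp only [Finset.mem_coe, Finset.mem_filter, Finset.mem_univ, true_and] at hv ⊢
          rwa [show u (u⁻¹ v) = v from u.apply_symm_apply v]
        · intro a _; exact u.symm_apply_apply a
        · intro v _; exact u.apply_symm_apply v
      rw [he2, show (Finset.univ.filter fun v => u b < v) = Finset.Ioi (u b) from by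
        ext x; simp, Fin.card_Ioi]
    rw [h1, ← Finset.sum_filter_add_sum_filter_not Finset.univ (fun b : Fin n => m < (b:ℕ))]
    have hz : ∑ b ∈ Finset.univ.filter (fun b : Fin n => ¬ m < (b:ℕ)),
        (Finset.univ.filter fun a => a < b ∧ u b < u a).card = 0 := by
      apply Finset.sum_eq_zero
      intro b hb
      simp only [Finset.mem_filter, Finset.mem_univ, true_and, not_lt] at hb
      rw [Finset.card_eq_zero, Finset.filter_eq_empty_iff]
      intro a _
      rintro ⟨hab, hua⟩
      exact absurd hua (not_lt.mpr (le_of_lt (mono_u a b hab hb)))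
    rw [hz, add_zero]
    rw [Finset.sum_congr rfl (fun b hb => hcard b
      (by simpa using (Finset.mem_filter.mp hb).2))]
    refine Finset.sum_nbij'
      (fun t => if h : m + t < n then (⟨m+t, h⟩ : Fin n) else ⟨0, by omega⟩)
      (fun b : Fin n => (b:ℕ) - m) ?_ ?_ ?_ ?_ ?_
    · intro t ht
      beta_reduce
      rw [Finset.mem_Icc] at ht
      have h : m + t < n := by omega
      simp only [dif_pos h]
      simp only [Finset.mem_filter, Finset.mem_univ, true_and]
      simp
      omega
    · intro b hb
      beta_reduce
      simp only [Finset.mem_filter, Finset.mem_univ, true_and] at hb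
      rw [Finset.mem_Icc]
      have := b.isLt
      omega
    · intro t ht
      beta_reduce
      rw [Finset.mem_Icc] at ht
      have h : m + t < n := by omega
      simp only [dif_pos h]
      simp
    · intro b hb
      beta_reduce
      simp only [Finset.mem_filter, Finset.mem_univ, true_and] at hb
      have h : m + ((b:ℕ) - m) < n := by have := b.isLt; omega
      simp only [dif_pos h]
      apply Fin.ext
      simp
      omega
    · intro t ht
      beta_reduce
      rw [Finset.mem_Icc] at ht
      have h : m + t < n := by omega
      simp only [dif_pos h]
      rw [hlam t ht.1 ht.2, toOne_eq' u (j + t) ⟨m+t, h⟩ (by simp; omega)]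
      have := (u ⟨m+t, h⟩).isLt
      omega
  refine ⟨part1, part2, part3, ?_⟩
  -- Part 4
  intro k hk1 hkn
  by_cases hcase : k ≤ toOne u n
  · rw [if_pos hcase, codeOne, Finset.card_eq_zero, Finset.filter_eq_empty_iff]
    intro v hv
    rintro ⟨hvk, hpos⟩
    rw [Finset.mem_Icc] at hv
    have hv1 : v - 1 < n := by omega
    have hk1' : k - 1 < n := by omega
    rw [toOne_eq' u⁻¹ k ⟨k-1, hk1'⟩ rfl, toOne_eq' u⁻¹ v ⟨v-1, hv1⟩ rfl] at hpos
    have huQ : u (u⁻¹ ⟨k-1,hk1'⟩) = ⟨k-1,hk1'⟩ := u.apply_symm_apply _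
    have huP : u (u⁻¹ ⟨v-1,hv1⟩) = ⟨v-1,hv1⟩ := u.apply_symm_apply _
    rcases le_or_gt ((u⁻¹ ⟨v-1,hv1⟩ : Fin n) : ℕ) m with hPm | hPm
    · have h := mono_u (u⁻¹ ⟨k-1,hk1'⟩) (u⁻¹ ⟨v-1,hv1⟩) (Fin.lt_def.mpr (by omega)) hPm
      rw [huQ, huP, Fin.lt_def] at h
      simp at h
      omega
    · have hge : (u ⟨n-1,hn1⟩ : ℕ) ≤ (u (u⁻¹ ⟨v-1,hv1⟩) : ℕ) := by
        rcases eq_or_lt_of_le (show ((u⁻¹ ⟨v-1,hv1⟩ : Fin n) : ℕ) ≤ n-1 from by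
          have := (u⁻¹ ⟨v-1,hv1⟩ : Fin n).isLt; omega) with he | hlt2
        · rw [show (u⁻¹ ⟨v-1,hv1⟩ : Fin n) = ⟨n-1,hn1⟩ from Fin.ext he]
        · have h := anti_u (u⁻¹ ⟨v-1,hv1⟩) ⟨n-1,hn1⟩ (by omega)
            (Fin.lt_def.mpr (by simp; omega))
          exact le_of_lt (Fin.lt_def.mp h)
      rw [huP] at hge
      simp at hge
      omega
  · rw [if_neg hcase]
    push_neg at hcase
    have hr1 : 1 ≤ r := by
      by_contra h0
      push_neg at h0
      have hmm : m = n - 1 := by omega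
      have hMe : Mx = ⟨n-1, hn1⟩ := Fin.ext (show (Mx:ℕ) = n - 1 by omega)
      have hval : (u ⟨n-1,hn1⟩ : ℕ) = n - 1 := by rw [← hMe, hum, ← hMe, ← hm]; omega
      omega
    have hk1' : k - 1 < n := by omega
    have huQ : u (u⁻¹ ⟨k-1,hk1'⟩) = ⟨k-1,hk1'⟩ := u.apply_symm_apply _
    -- the key bijection
    have hkey : codeOne u k = ((Finset.Icc 1 r).filter fun t => toOne u (j + t) < k).card := by
      rw [codeOne]
      refine Finset.card_nbij' (fun v => toOne u⁻¹ v - j) (fun t => toOne u (j + t))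
        ?_ ?_ ?_ ?_
      · -- forward map
        intro v hv
        beta_reduce
        rw [Finset.mem_coe, Finset.mem_filter, Finset.mem_Icc] at hv
        obtain ⟨⟨hv1', hvn⟩, hvk, hpos⟩ := hv
        have hv1 : v - 1 < n := by omega
        rw [toOne_eq' u⁻¹ k ⟨k-1, hk1'⟩ rfl, toOne_eq' u⁻¹ v ⟨v-1, hv1⟩ rfl] at hpos
        have huP : u (u⁻¹ ⟨v-1,hv1⟩) = ⟨v-1,hv1⟩ := u.apply_symm_apply _
        have hPm : m < ((u⁻¹ ⟨v-1,hv1⟩ : Fin n) : ℕ) := by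
          by_contra hc
          push_neg at hc
          have h := mono_u (u⁻¹ ⟨k-1,hk1'⟩) (u⁻¹ ⟨v-1,hv1⟩) (Fin.lt_def.mpr (by omega)) hc
          rw [huQ, huP, Fin.lt_def] at h
          simp at h
          omega
        have hPn := (u⁻¹ ⟨v-1,hv1⟩ : Fin n).isLt
        rw [toOne_eq' u⁻¹ v ⟨v-1, hv1⟩ rfl]
        rw [Finset.mem_coe, Finset.mem_filter, Finset.mem_Icc]
        refine ⟨⟨by omega, by omega⟩, ?_⟩
        rw [show j + (((u⁻¹ ⟨v-1,hv1⟩ : Fin n) : ℕ) + 1 - j)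
            = ((u⁻¹ ⟨v-1,hv1⟩ : Fin n) : ℕ) + 1 from by omega,
          toOne_eq' u _ (u⁻¹ ⟨v-1,hv1⟩) (by omega), huP]
        simp
        omega
      · -- backward map
        intro t ht
        beta_reduce
        rw [Finset.mem_coe, Finset.mem_filter, Finset.mem_Icc] at ht
        obtain ⟨⟨ht1, htr⟩, htk⟩ := ht
        have hA : m + t < n := by omega
        have he : toOne u (j + t) = (u ⟨m+t, hA⟩ : ℕ) + 1 :=
          toOne_eq' u (j+t) ⟨m+t, hA⟩ (by simp; omega)
        rw [he] at htk ⊢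
        rw [Finset.mem_coe, Finset.mem_filter, Finset.mem_Icc]
        have hvlt := (u ⟨m+t, hA⟩).isLt
        refine ⟨⟨by omega, by omega⟩, htk, ?_⟩
        rw [toOne_eq' u⁻¹ k ⟨k-1, hk1'⟩ rfl,
          toOne_eq' u⁻¹ ((u ⟨m+t, hA⟩ : ℕ) + 1) (u ⟨m+t, hA⟩) (by simp),
          show ∀ x, u⁻¹ (u x) = x from u.symm_apply_apply]
        have hQlt : ((u⁻¹ ⟨k-1,hk1'⟩ : Fin n) : ℕ) < m + t := by
          by_contra hc
          push_neg at hc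
          rcases eq_or_lt_of_le hc with he2 | hlt2
          · have : u⁻¹ ⟨k-1,hk1'⟩ = ⟨m+t, hA⟩ := Fin.ext he2.symm
            rw [this] at huQ
            have : ((u ⟨m+t, hA⟩ : Fin n) : ℕ) = k - 1 := by rw [huQ]
            omega
          · have h := anti_u ⟨m+t, hA⟩ (u⁻¹ ⟨k-1,hk1'⟩) (by simp) (Fin.lt_def.mpr (by simpa))
            rw [huQ, Fin.lt_def] at h
            simp at h
            omega
        simp
        omega
      · -- left inverse
        intro v hv
        beta_reduce
        rw [Finset.mem_coe, Finset.mem_filter, Finset.mem_Icc] at hv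
        obtain ⟨⟨hv1', hvn⟩, hvk, hpos⟩ := hv
        have hv1 : v - 1 < n := by omega
        rw [toOne_eq' u⁻¹ k ⟨k-1, hk1'⟩ rfl, toOne_eq' u⁻¹ v ⟨v-1, hv1⟩ rfl] at hpos
        have huP : u (u⁻¹ ⟨v-1,hv1⟩) = ⟨v-1,hv1⟩ := u.apply_symm_apply _
        have hPm : m < ((u⁻¹ ⟨v-1,hv1⟩ : Fin n) : ℕ) := by
          by_contra hc
          push_neg at hc
          have h := mono_u (u⁻¹ ⟨k-1,hk1'⟩) (u⁻¹ ⟨v-1,hv1⟩) (Fin.lt_def.mpr (by omega)) hc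
          rw [huQ, huP, Fin.lt_def] at h
          simp at h
          omega
        have hPn := (u⁻¹ ⟨v-1,hv1⟩ : Fin n).isLt
        rw [toOne_eq' u⁻¹ v ⟨v-1, hv1⟩ rfl]
        rw [show j + (((u⁻¹ ⟨v-1,hv1⟩ : Fin n) : ℕ) + 1 - j)
            = ((u⁻¹ ⟨v-1,hv1⟩ : Fin n) : ℕ) + 1 from by omega,
          toOne_eq' u _ (u⁻¹ ⟨v-1,hv1⟩) (by omega), huP]
        simp
        omega
      · -- right inverse
        intro t ht
        beta_reduce
        rw [Finset.mem_coe, Finset.mem_filter, Finset.mem_Icc] at ht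
        obtain ⟨⟨ht1, htr⟩, _⟩ := ht
        have hA : m + t < n := by omega
        have he : toOne u (j + t) = (u ⟨m+t, hA⟩ : ℕ) + 1 :=
          toOne_eq' u (j+t) ⟨m+t, hA⟩ (by simp; omega)
        rw [he, toOne_eq' u⁻¹ ((u ⟨m+t, hA⟩ : ℕ) + 1) (u ⟨m+t, hA⟩) (by simp),
          show ∀ x, u⁻¹ (u x) = x from u.symm_apply_apply]
        simp
        omega
    rw [hkey]
    set C := ((Finset.Icc 1 r).filter fun t => toOne u (j + t) < k).card with hC
    have hCr : C ≤ r := by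
      rw [hC]
      have := Finset.card_filter_le (Finset.Icc 1 r) (fun t => toOne u (j + t) < k)
      rw [Nat.card_Icc] at this
      omega
    have hC1 : 1 ≤ C := by
      have hmem : r ∈ (Finset.Icc 1 r).filter fun t => toOne u (j + t) < k := by
        rw [Finset.mem_filter, Finset.mem_Icc]
        exact ⟨⟨hr1, le_rfl⟩, by rw [show j + r = n by omega]; exact hcase⟩
      rw [hC]
      exact Finset.card_pos.mpr ⟨r, hmem⟩
    have hBlam : ((Finset.Icc 1 r).filter fun t => toOne u (j + t) < k)
        = (Finset.Icc 1 r).filter fun t => n - k < lam t := by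
      apply Finset.filter_congr
      intro t ht
      rw [Finset.mem_Icc] at ht
      have hA : m + t < n := by omega
      rw [toOne_eq' u (j+t) ⟨m+t, hA⟩ (by simp; omega), hlam t ht.1 ht.2,
        toOne_eq' u (j+t) ⟨m+t, hA⟩ (by simp; omega)]
      have := (u ⟨m+t, hA⟩).isLt
      omega
    have hstep : ∀ t < r, lam t ≤ lam (t+1) := by
      intro t h
      rcases Nat.eq_zero_or_pos t with h0 | hpos
      · rw [h0, hlam0]; omega
      · exact le_of_lt (part1 t hpos h)
    have hlam_mono : ∀ a b, 1 ≤ a → a ≤ b → b ≤ r → lam a ≤ lam b :=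
      fun a b _ h2 h3 => aux_mono_chain lam r hstep a b h2 h3
    obtain ⟨hth1, hth2⟩ := aux_count_gt r lam hlam_mono (n - k) C
      (by rw [hBlam] at hC; exact hC.symm)
    have hL2 : n - k < lam (r - C + 1) := hth1 hC1
    have hL1 : lam (r - C) ≤ n - k := by
      rcases eq_or_lt_of_le hCr with he | hlt
      · rw [show r - C = 0 by omega, hlam0]; omega
      · exact hth2 hlt
    have hBmu : ∀ D, D ≤ r → ((Finset.Icc 1 s).filter fun x => mu x ≤ D).card
        = s - lam (r - D) := by
      intro D hD
      rw [Finset.card_eq_sum_card_fiberwise (f := mu) (t := Finset.Icc 1 D)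
        (fun x hx => by
          rw [Finset.mem_coe, Finset.mem_filter, Finset.mem_Icc] at hx
          rw [Finset.mem_coe, Finset.mem_Icc]
          exact ⟨(hmu_parts x hx.1.1 hx.1.2).1, hx.2⟩)]
      have hfib : ∀ b ∈ Finset.Icc 1 D,
          ((((Finset.Icc 1 s).filter fun x => mu x ≤ D)).filter fun x => mu x = b).card
          = lam (r - b + 1) - lam (r - b) := by
        intro b hb
        rw [Finset.mem_Icc] at hb
        rw [Finset.filter_filter]
        rw [Finset.filter_congr (q := fun x => mu x = b) (fun x _ =>
          ⟨fun h => h.2, fun h => ⟨le_trans (le_of_eq h) hb.2, h⟩⟩)]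
        exact hmu_dual b hb.1 (le_trans hb.2 hD)
      rw [Finset.sum_congr rfl hfib, aux_telescope lam r hstep D hD, part3]
    have ht0s : 1 ≤ k - toOne u n ∧ k - toOne u n ≤ s := by
      constructor <;> omega
    have hmule : mu (k - toOne u n) ≤ C := by
      rw [aux_count_le s mu hmu_mono (k - toOne u n) ht0s.1 ht0s.2 C, hBmu C hCr]
      omega
    have hmuge : C ≤ mu (k - toOne u n) := by
      by_contra hc
      push_neg at hc
      have h5 : mu (k - toOne u n) ≤ C - 1 := by omega
      rw [aux_count_le s mu hmu_mono (k - toOne u n) ht0s.1 ht0s.2 (C-1),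
        hBmu (C-1) (by omega), show r - (C-1) = r - C + 1 by omega] at h5
      omega
    omega
end
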